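/- arXiv:1804.05783 — 5 statements merged into one kernel-verified Lean document; each statement's English description precedes it below -/
import Mathlib

section
/- Uniform consistency of the local constant boundary estimator (random design): under assumptions (A1)–(A4), the estimator h̃₀ satisfies ‖h̃₀ − h₀‖_∞ = sup_{x∈[0,1]} |h̃₀(x) − h₀(x)| = o_P(1), i.e. for every δ > 0, P(sup_{x∈[0,1]} |h̃₀(x) − h₀(x)| > δ) → 0 as n → ∞. -/
/-!
Outside a null event every error is `≤ 0` and every covariate lies in `[0, 1]`. There
`h̃₀ ≤ h₀ + δ` by uniform continuity of `h₀`, and `h̃₀(t) ≥ h₀(t) - δ` as soon as the grid cell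
of width `1 / ⌈1 / b_n⌉ ≤ b_n` containing `t` holds a sample with error above `-δ / 2`. Each
sample lands in a given cell with such an error with probability at least `c p / ⌈1 / b_n⌉`
(`c` the lower bound of `f_X`, `p = 1 - F₀(-δ / 2) > 0`), independently over the samples, so
some cell stays empty with probability at most `⌈1 / b_n⌉ exp(-c p n / ⌈1 / b_n⌉)`. This tends
to `0` because `n b_n / log n → ∞`.
-/

open MeasureTheory ProbabilityTheory Filter Topology Set
open scoped ENNReal Finset

namespace ProbabilityTheory

variable {ι Ω α β : Type*} [MeasurableSpace Ω] [MeasurableSpace α] [MeasurableSpace β]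
  {μ : Measure Ω} {f : ι → Ω → α} {g : ι → Ω → β}

lemma measure_biInter_preimage_inter_preimage_eq_prod (hf : iIndepFun f μ) (hg : iIndepFun g μ)
    (hfg : IndepFun (fun ω i ↦ f i ω) (fun ω i ↦ g i ω) μ) (S : Finset ι) {A : ι → Set α}
    {B : ι → Set β} (hA : ∀ i ∈ S, MeasurableSet (A i)) (hB : ∀ i ∈ S, MeasurableSet (B i)) :
    μ (⋂ i ∈ S, f i ⁻¹' A i ∩ g i ⁻¹' B i) = ∏ i ∈ S, μ (f i ⁻¹' A i ∩ g i ⁻¹' B i) := by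
  have hsplit : ⋂ i ∈ S, f i ⁻¹' A i ∩ g i ⁻¹' B i =
      (fun ω i ↦ f i ω) ⁻¹' (⋂ i ∈ S, Function.eval i ⁻¹' A i) ∩
        (fun ω i ↦ g i ω) ⁻¹' (⋂ i ∈ S, Function.eval i ⁻¹' B i) := by
    ext ω
    simp only [mem_iInter, mem_inter_iff, mem_preimage, Function.eval, forall_and]
  rw [hsplit, hfg.measure_inter_preimage_eq_mul _ _
    (S.measurableSet_biInter fun i hi ↦ measurable_pi_apply i (hA i hi))
    (S.measurableSet_biInter fun i hi ↦ measurable_pi_apply i (hB i hi))]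
  simp only [preimage_iInter, preimage_preimage]
  rw [hf.meas_biInter fun i hi ↦ ⟨A i, hA i hi, rfl⟩,
    hg.meas_biInter fun i hi ↦ ⟨B i, hB i hi, rfl⟩, ← Finset.prod_mul_distrib]
  refine Finset.prod_congr rfl fun i hi ↦ ?_
  exact ((hfg.comp (measurable_pi_apply i) (measurable_pi_apply i)).measure_inter_preimage_eq_mul
    _ _ (hA i hi) (hB i hi)).symm

lemma iIndepFun.prodMk_of_indepFun (hfm : ∀ i, Measurable (f i)) (hgm : ∀ i, Measurable (g i))
    (hf : iIndepFun f μ) (hg : iIndepFun g μ)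
    (hfg : IndepFun (fun ω i ↦ f i ω) (fun ω i ↦ g i ω) μ) :
    iIndepFun (fun i ω ↦ (f i ω, g i ω)) μ := by
  let rectangles : Set (Set (α × β)) := image2 (· ×ˢ ·) {A | MeasurableSet A} {B | MeasurableSet B}
  let π : ι → Set (Set Ω) := fun i ↦ {s | ∃ t ∈ rectangles, (fun ω ↦ (f i ω, g i ω)) ⁻¹' t = s}
  have hπ : ∀ i, MeasurableSpace.comap (fun ω ↦ (f i ω, g i ω)) inferInstance =
      MeasurableSpace.generateFrom (π i) := fun i ↦ by
    rw [← generateFrom_prod, MeasurableSpace.comap_generateFrom]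
    rfl
  rw [iIndepFun_iff_iIndep]
  refine iIndepSets.iIndep (fun i ↦ ((hfm i).prodMk (hgm i)).comap_le) π
    (fun i ↦ isPiSystem_prod.comap _) hπ ?_
  rw [iIndepSets_iff]
  intro S F hF
  classical
  choose! t ht hFt using hF
  choose! A hA B hB hAB using ht
  have hF' : ∀ i ∈ S, F i = f i ⁻¹' A i ∩ g i ⁻¹' B i := fun i hi ↦ by
    rw [← hFt i hi, ← hAB i hi, mk_preimage_prod]
  rw [iInter₂_congr hF', Finset.prod_congr rfl fun i hi ↦ congrArg μ (hF' i hi)]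
  exact measure_biInter_preimage_inter_preimage_eq_prod hf hg hfg S hA hB

end ProbabilityTheory

lemma ENNReal.one_sub_ofReal_pow_le {q : ℝ} (hq : 0 ≤ q) (n : ℕ) :
    (1 - ENNReal.ofReal q) ^ n ≤ ENNReal.ofReal (Real.exp (-(q * n))) := by
  rw [← ENNReal.ofReal_one, ← ENNReal.ofReal_sub _ hq, mul_comm, neg_mul_eq_mul_neg,
    Real.exp_nat_mul, ENNReal.ofReal_pow (Real.exp_nonneg _)]
  exact pow_le_pow_left₀ zero_le (ENNReal.ofReal_le_ofReal (Real.one_sub_le_exp_neg q)) n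

section Sampling

variable {ι κ Ω α : Type*} [MeasurableSpace Ω] [MeasurableSpace α] {μ : Measure Ω}
  [IsProbabilityMeasure μ]

lemma measure_biUnion_biInter_preimage_compl_le {Z : ι → Ω → α} (hZm : ∀ i, Measurable (Z i))
    (hZ : iIndepFun Z μ) (I : Finset κ) (S : Finset ι) {T : κ → Set α}
    (hT : ∀ k ∈ I, MeasurableSet (T k)) {q : ℝ} (hq0 : 0 ≤ q)
    (hq : ∀ k ∈ I, ∀ i ∈ S, ENNReal.ofReal q ≤ μ (Z i ⁻¹' T k)) :
    μ (⋃ k ∈ I, ⋂ i ∈ S, Z i ⁻¹' (T k)ᶜ) ≤ ENNReal.ofReal (#I * Real.exp (-(q * #S))) := by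
  calc μ (⋃ k ∈ I, ⋂ i ∈ S, Z i ⁻¹' (T k)ᶜ)
      ≤ ∑ k ∈ I, μ (⋂ i ∈ S, Z i ⁻¹' (T k)ᶜ) := measure_biUnion_finset_le _ _
    _ ≤ ∑ _k ∈ I, (1 - ENNReal.ofReal q) ^ #S := Finset.sum_le_sum fun k hk ↦ by
      rw [hZ.meas_biInter fun i _ ↦ ⟨_, (hT k hk).compl, rfl⟩, ← Finset.prod_const]
      refine Finset.prod_le_prod' fun i hi ↦ ?_
      rw [preimage_compl, prob_compl_eq_one_sub (hZm i (hT k hk))]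
      exact tsub_le_tsub_left (hq k hk i hi) 1
    _ ≤ ∑ _k ∈ I, ENNReal.ofReal (Real.exp (-(q * #S))) :=
      Finset.sum_le_sum fun _ _ ↦ ENNReal.one_sub_ofReal_pow_le hq0 _
    _ = ENNReal.ofReal (#I * Real.exp (-(q * #S))) := by
      rw [Finset.sum_const, nsmul_eq_mul, ENNReal.ofReal_mul (Nat.cast_nonneg _),
        ENNReal.ofReal_natCast]

end Sampling

section Laws

variable {Ω β : Type*} [MeasurableSpace Ω] [MeasurableSpace β] {μ : Measure Ω} {X : Ω → β}
  {ν : Measure β} {s : Set β}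

lemma ae_mem_of_map_eq_withDensity (hX : AEMeasurable X μ) (hs : MeasurableSet s)
    {ρ : β → ℝ≥0∞} (hlaw : μ.map X = (ν.restrict s).withDensity ρ) : ∀ᵐ ω ∂μ, X ω ∈ s :=
  ae_of_ae_map hX (hlaw ▸ (withDensity_absolutelyContinuous _ _).ae_le (ae_restrict_mem hs))

lemma ofReal_mul_le_measure_preimage_of_map_eq_withDensity (hX : Measurable X) {ρ : β → ℝ}
    (hlaw : μ.map X = (ν.restrict s).withDensity fun t ↦ ENNReal.ofReal (ρ t)) {u : Set β}
    (hu : MeasurableSet u) (hus : u ⊆ s) {c : ℝ} (hc : ∀ t ∈ u, c ≤ ρ t) :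
    ENNReal.ofReal c * ν u ≤ μ (X ⁻¹' u) := by
  rw [← Measure.map_apply hX hu, hlaw, withDensity_apply _ hu, Measure.restrict_restrict hu,
    inter_eq_left.2 hus, ← setLIntegral_const]
  exact setLIntegral_mono' hu fun t ht ↦ ENNReal.ofReal_le_ofReal (hc t ht)

lemma measure_preimage_Ioi_eq_ofReal_one_sub [IsProbabilityMeasure μ] {e : Ω → ℝ}
    (he : Measurable e) {F : ℝ → ℝ} (hF : ∀ t, F t = (μ {ω | e ω ≤ t}).toReal) (t : ℝ) :
    μ (e ⁻¹' Ioi t) = ENNReal.ofReal (1 - F t) := by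
  rw [← compl_Iic, preimage_compl, prob_compl_eq_one_sub (he measurableSet_Iic), hF,
    ENNReal.ofReal_sub _ ENNReal.toReal_nonneg, ENNReal.ofReal_one,
    ENNReal.ofReal_toReal (measure_ne_top _ _)]
  rfl

lemma ae_le_of_cdf_eq_one [IsProbabilityMeasure μ] {e : Ω → ℝ} (he : Measurable e) {F : ℝ → ℝ}
    (hF : ∀ t, F t = (μ {ω | e ω ≤ t}).toReal) {t : ℝ} (ht : F t = 1) : ∀ᵐ ω ∂μ, e ω ≤ t := by
  have := measure_preimage_Ioi_eq_ofReal_one_sub he hF t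
  rw [ht, sub_self, ENNReal.ofReal_zero] at this
  exact (measure_eq_zero_iff_ae_notMem.1 this).mono fun _ h ↦ not_lt.1 h

end Laws

def gridCell (m k : ℕ) : Set ℝ := Icc (k / m) ((k + 1) / m)

lemma measurableSet_gridCell (m k : ℕ) : MeasurableSet (gridCell m k) := measurableSet_Icc

lemma exists_lt_mem_gridCell {m : ℕ} (hm : 0 < m) {t : ℝ} (ht : t ∈ Icc 0 1) :
    ∃ k < m, t ∈ gridCell m k := by
  have hm' : (0 : ℝ) < m := Nat.cast_pos.2 hm
  rcases lt_or_ge ⌊t * m⌋₊ m with hlt | hge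
  · refine ⟨_, hlt, (div_le_iff₀ hm').2 (Nat.floor_le (mul_nonneg ht.1 hm'.le)),
      (le_div_iff₀ hm').2 (Nat.lt_floor_add_one _).le⟩
  · obtain ⟨j, rfl⟩ : ∃ j, m = j + 1 := ⟨m - 1, by omega⟩
    have ht1 : t = 1 := by
      refine le_antisymm ht.2 (le_of_mul_le_mul_right ?_ hm')
      rw [one_mul]
      exact (Nat.cast_le.2 hge).trans (Nat.floor_le (mul_nonneg ht.1 hm'.le))
    refine ⟨j, by omega, ?_, ?_⟩ <;> push_cast <;> rw [ht1]
    · exact div_le_one_of_le₀ (by linarith) (by positivity)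
    · rw [div_self (by positivity)]

lemma gridCell_subset_Icc {m k : ℕ} (hk : k < m) : gridCell m k ⊆ Icc 0 1 :=
  Icc_subset_Icc (by positivity) (div_le_one_of_le₀ (by exact_mod_cast hk) (Nat.cast_nonneg m))

lemma volume_gridCell (m k : ℕ) : volume (gridCell m k) = ENNReal.ofReal (1 / m) := by
  rw [gridCell, Real.volume_Icc]
  ring_nf

lemma abs_sub_le_of_mem_gridCell {m k : ℕ} {x y : ℝ} (hx : x ∈ gridCell m k)
    (hy : y ∈ gridCell m k) : |x - y| ≤ 1 / m := by
  have := Real.dist_le_of_mem_Icc hx hy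
  rw [Real.dist_eq] at this
  linarith [show ((k : ℝ) + 1) / m - k / m = 1 / m by ring]

lemma ofReal_div_mul_le_measure_preimage_gridCell_prod {Ω : Type*} [MeasurableSpace Ω]
    {μ : Measure Ω} {X e : Ω → ℝ} (hX : Measurable X) (hXe : IndepFun X e μ) {ρ : ℝ → ℝ}
    (hlaw : μ.map X = (volume.restrict (Icc 0 1)).withDensity fun t ↦ ENNReal.ofReal (ρ t))
    {c : ℝ} (hc : ∀ t ∈ Icc 0 1, c ≤ ρ t) {m k : ℕ} (hk : k < m) {s : Set ℝ}
    (hs : MeasurableSet s) :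
    ENNReal.ofReal (c / m) * μ (e ⁻¹' s) ≤ μ ((fun ω ↦ (X ω, e ω)) ⁻¹' (gridCell m k ×ˢ s)) := by
  rw [mk_preimage_prod, hXe.measure_inter_preimage_eq_mul _ _ (measurableSet_gridCell m k) hs]
  gcongr
  rw [div_eq_mul_one_div, ENNReal.ofReal_mul' (by positivity), ← volume_gridCell m k]
  exact ofReal_mul_le_measure_preimage_of_map_eq_withDensity hX hlaw (measurableSet_gridCell m k)
    (gridCell_subset_Icc hk) fun t ht ↦ hc t (gridCell_subset_Icc hk ht)

lemma measure_biUnion_gridCell_biInter_preimage_compl_le {Ω : Type*} [MeasurableSpace Ω]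
    {μ : Measure Ω} [IsProbabilityMeasure μ] {X e : ℕ → Ω → ℝ} (hXm : ∀ i, Measurable (X i))
    (hem : ∀ i, Measurable (e i)) (hXe : iIndepFun (fun i ω ↦ (X i ω, e i ω)) μ)
    (hXe' : ∀ i, IndepFun (X i) (e i) μ) {ρ : ℝ → ℝ}
    (hlaw : ∀ i, μ.map (X i) = (volume.restrict (Icc 0 1)).withDensity fun t ↦ ENNReal.ofReal (ρ t))
    {c : ℝ} (hc0 : 0 ≤ c) (hc : ∀ t ∈ Icc 0 1, c ≤ ρ t) {s : Set ℝ} (hs : MeasurableSet s)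
    {p : ℝ} (hp0 : 0 ≤ p) (hp : ∀ i, ENNReal.ofReal p ≤ μ (e i ⁻¹' s)) (m n : ℕ) :
    μ (⋃ k ∈ Finset.range m, ⋂ i ∈ Finset.range n,
        (fun ω ↦ (X i ω, e i ω)) ⁻¹' (gridCell m k ×ˢ s)ᶜ) ≤
      ENNReal.ofReal (m * Real.exp (-(c * p / m * n))) := by
  have := measure_biUnion_biInter_preimage_compl_le (fun i ↦ (hXm i).prodMk (hem i)) hXe
    (Finset.range m) (Finset.range n) (fun k _ ↦ (measurableSet_gridCell m k).prod hs)
    (by positivity : 0 ≤ c * p / m) fun k hk i _ ↦ by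
      rw [mul_div_right_comm, ENNReal.ofReal_mul (by positivity)]
      exact (mul_le_mul_right (hp i) _).trans (ofReal_div_mul_le_measure_preimage_gridCell_prod
        (hXm i) (hXe' i) (hlaw i) hc (Finset.mem_range.1 hk) hs)
  rwa [Finset.card_range, Finset.card_range] at this

lemma iSup_max_sub_le_of_forall (x z : ℕ → ℝ) (g : ℝ → ℝ) (n : ℕ) (s : Set ℝ) (b δ : ℝ)
    (hup : ∀ t ∈ s, ∀ i < n, |x i - t| ≤ b → z i ≤ g t + δ)
    (hdown : ∀ t ∈ s, ∃ i < n, |x i - t| ≤ b ∧ g t - δ ≤ z i) :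
    ⨆ t : s, max ((⨆ i : {i : ℕ // i < n ∧ |x i - t| ≤ b}, (z i : EReal)) - (g t : EReal))
      ((g t : EReal) - ⨆ i : {i : ℕ // i < n ∧ |x i - t| ≤ b}, (z i : EReal)) ≤ (δ : EReal) := by
  refine iSup_le fun ⟨t, ht⟩ ↦ ?_
  have hle : (⨆ i : {i : ℕ // i < n ∧ |x i - t| ≤ b}, (z i : EReal)) ≤ ((g t + δ : ℝ) : EReal) :=
    iSup_le fun ⟨i, hi, hb⟩ ↦ EReal.coe_le_coe_iff.2 (hup t ht i hi hb)
  obtain ⟨i, hi, hb, hz⟩ := hdown t ht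
  have hge : ((g t - δ : ℝ) : EReal) ≤ ⨆ i : {i : ℕ // i < n ∧ |x i - t| ≤ b}, (z i : EReal) :=
    le_iSup_of_le (⟨i, hi, hb⟩ : {i : ℕ // i < n ∧ |x i - t| ≤ b}) (EReal.coe_le_coe_iff.2 hz)
  refine max_le ((EReal.sub_le_sub hle le_rfl).trans ?_) ((EReal.sub_le_sub le_rfl hge).trans ?_)
  all_goals rw [← EReal.coe_sub]; exact EReal.coe_le_coe_iff.2 (by linarith)

lemma exists_gridCell_forall_notMem_of_lt_iSup (x e z : ℕ → ℝ) (h : ℝ → ℝ) (n m : ℕ) (b δ : ℝ)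
    (hz : ∀ i, z i = h (x i) + e i) (hm : 0 < m) (hmb : 1 / m ≤ b) (hδ : 0 ≤ δ)
    (hmod : ∀ x ∈ Icc (0 : ℝ) 1, ∀ y ∈ Icc (0 : ℝ) 1, |x - y| ≤ b → |h x - h y| ≤ δ / 2)
    (hx : ∀ i < n, x i ∈ Icc 0 1) (he : ∀ i < n, e i ≤ 0)
    (hlt : (δ : EReal) < ⨆ t : Icc (0 : ℝ) 1,
      max ((⨆ i : {i : ℕ // i < n ∧ |x i - t| ≤ b}, (z i : EReal)) - (h t : EReal))
        ((h t : EReal) - ⨆ i : {i : ℕ // i < n ∧ |x i - t| ≤ b}, (z i : EReal))) :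
    ∃ k < m, ∀ i < n, (x i, e i) ∉ gridCell m k ×ˢ Ioi (-(δ / 2)) := by
  by_contra! hcover
  refine hlt.not_ge (iSup_max_sub_le_of_forall x z h n _ b δ (fun t ht i hi hb ↦ ?_) fun t ht ↦ ?_)
  · have := abs_le.1 (hmod _ (hx i hi) t ht hb)
    linarith [hz i, he i hi]
  · obtain ⟨k, hk, htk⟩ := exists_lt_mem_gridCell hm ht
    obtain ⟨i, hi, hxi, hei⟩ := hcover k hk
    have hb : |x i - t| ≤ b := (abs_sub_le_of_mem_gridCell hxi htk).trans hmb
    have := abs_le.1 (hmod _ (hx i hi) t ht hb)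
    exact ⟨i, hi, hb, by linarith [hz i, mem_Ioi.1 hei]⟩

lemma tendsto_natCeil_inv_mul_exp_neg {b : ℕ → ℝ} (hbpos : ∀ n, 0 < b n)
    (hb0 : Tendsto b atTop (𝓝 0))
    (hblog : Tendsto (fun n : ℕ ↦ Real.log n / (n * b n)) atTop (𝓝 0)) {a : ℝ} (ha : 0 < a) :
    Tendsto (fun n : ℕ ↦ (⌈1 / b n⌉₊ : ℝ) * Real.exp (-(a / ⌈1 / b n⌉₊ * n))) atTop (𝓝 0) := by
  refine squeeze_zero' (Eventually.of_forall fun n ↦ by positivity) ?_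
    (tendsto_const_div_atTop_nhds_zero_nat (a / 2))
  filter_upwards [hb0.eventually (eventually_le_nhds one_pos),
    hblog.eventually (eventually_le_nhds (by positivity : 0 < a / 4)), eventually_ge_atTop 3]
    with n hb1 hlog hn3
  set K : ℝ := (⌈1 / b n⌉₊ : ℝ)
  have hb := hbpos n
  have hn : (3 : ℝ) ≤ n := by exact_mod_cast hn3
  have hlog1 : 1 ≤ Real.log n := by
    rw [Real.le_log_iff_exp_le (by linarith)]
    linarith [Real.exp_one_lt_d9]
  have hlogb : Real.log n ≤ a / 4 * (n * b n) := (div_le_iff₀ (by positivity)).1 hlog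
  have hKpos : 0 < K := Nat.cast_pos.2 (Nat.ceil_pos.2 (by positivity))
  have hK : K ≤ 2 / b n := by
    have : 1 / b n + 1 ≤ 2 / b n := by
      rw [div_add_one hb.ne', div_le_div_iff_of_pos_right hb]
      linarith
    exact (Nat.ceil_lt_add_one (by positivity)).le.trans this
  -- the exponent dominates `2 log n` because `n / K ≥ n b_n / 2 ≫ log n`
  have hexp : Real.exp (-(a / K * n)) ≤ ((n : ℝ) ^ 2)⁻¹ := by
    have hbK : b n / 2 ≤ 1 / K := by
      rw [div_le_div_iff₀ two_pos hKpos]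
      linarith [(le_div_iff₀ hb).1 hK]
    have : a * (b n / 2) * n ≤ a / K * n := by
      rw [div_eq_mul_one_div a K]
      gcongr
    rw [← Real.exp_log (by positivity : (0 : ℝ) < n ^ 2), ← Real.exp_neg, Real.log_pow]
    refine Real.exp_le_exp.2 ?_
    push_cast
    linarith
  have hbinv : 2 / b n ≤ a / 2 * n := by
    rw [div_le_iff₀ hb]
    nlinarith
  calc K * Real.exp (-(a / K * n)) ≤ a / 2 * n * ((n : ℝ) ^ 2)⁻¹ :=
        mul_le_mul (hK.trans hbinv) hexp (by positivity) (by positivity)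
    _ = a / 2 / n := by field_simp

theorem boundary_estimator_uniform_consistency_random_design_general
    {Ω : Type} [MeasureSpace Ω] [IsProbabilityMeasure (ℙ : Measure Ω)]
    (X Y ε : ℕ → Ω → ℝ) (Λ₀ h₀ F₀ fX : ℝ → ℝ) (b : ℕ → ℝ)
    -- (A1): model with i.i.d. errors, F₀(0) = 1, F₀(−Δ) < 1 for Δ > 0,
    -- errors independent of covariates
    (hmodel : ∀ i ω, Λ₀ (Y i ω) = h₀ (X i ω) + ε i ω)
    (hεmeas : ∀ i, Measurable (ε i))
    (hεiid : iIndepFun ε ℙ)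
    (hεid : ∀ i, IdentDistrib (ε i) (ε 0) ℙ ℙ)
    (hF₀ : ∀ t, F₀ t = (ℙ {ω | ε 0 ω ≤ t}).toReal)
    (hF₀zero : F₀ 0 = 1)
    (hF₀lt : ∀ d : ℝ, 0 < d → F₀ (-d) < 1)
    (hindepεX : IndepFun (fun ω i => ε i ω) (fun ω i => X i ω) ℙ)
    -- (A2): covariates i.i.d. with density f_X continuous and bounded away
    -- from zero on its support [0,1]
    (hXmeas : ∀ i, Measurable (X i))
    (hXiid : iIndepFun X ℙ)
    (hXlaw : ∀ i, Measure.map (X i) ℙ =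
      (volume.restrict (Set.Icc (0 : ℝ) 1)).withDensity (fun t => ENNReal.ofReal (fX t)))
    (hfXpos : ∃ c > (0 : ℝ), ∀ t ∈ Set.Icc (0 : ℝ) 1, c ≤ fX t)
    -- (A3): h₀ continuous on [0,1]
    (hh₀ : ContinuousOn h₀ (Set.Icc 0 1))
    -- (A4): b_n > 0, b_n → 0, (log n)/(n b_n) → 0
    (hbpos : ∀ n, 0 < b n) (hb0 : Tendsto b atTop (𝓝 0))
    (hblog : Tendsto (fun n : ℕ => Real.log n / (n * b n)) atTop (𝓝 0)) :
    ∀ δ : ℝ, 0 < δ →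
      Tendsto
        (fun n : ℕ => ℙ {ω : Ω |
          (δ : EReal) < ⨆ t : Set.Icc (0 : ℝ) 1,
            max
              ((⨆ i : {i : ℕ // i < n ∧ |X i ω - (t : ℝ)| ≤ b n},
                  ((Λ₀ (Y (i : ℕ) ω) : ℝ) : EReal)) - ((h₀ t : ℝ) : EReal))
              (((h₀ t : ℝ) : EReal) -
                ⨆ i : {i : ℕ // i < n ∧ |X i ω - (t : ℝ)| ≤ b n},
                  ((Λ₀ (Y (i : ℕ) ω) : ℝ) : EReal))})
        atTop (𝓝 0) := by
  intro δ hδ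
  obtain ⟨c, hc, hcfX⟩ := hfXpos
  obtain ⟨r, hr, hmod⟩ := Metric.uniformContinuousOn_iff_le.1
    (isCompact_Icc.uniformContinuousOn_of_continuous hh₀) (δ / 2) (by positivity)
  have hp : 0 < 1 - F₀ (-(δ / 2)) := sub_pos.2 (hF₀lt _ (by positivity))
  have hK : ∀ n, 0 < ⌈1 / b n⌉₊ := fun n ↦ Nat.ceil_pos.2 (one_div_pos.2 (hbpos n))
  have hae : ∀ᵐ ω, ∀ i, X i ω ∈ Icc 0 1 ∧ ε i ω ≤ 0 := ae_all_iff.2 fun i ↦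
    (ae_mem_of_map_eq_withDensity (hXmeas i).aemeasurable measurableSet_Icc (hXlaw i)).and
      ((hεid i).symm.ae_mem_snd measurableSet_Iic (ae_le_of_cdf_eq_one (hεmeas 0) hF₀ hF₀zero))
  have hbad := measure_biUnion_gridCell_biInter_preimage_compl_le hXmeas hεmeas
    (hXiid.prodMk_of_indepFun hXmeas hεmeas hεiid hindepεX.symm)
    (fun i ↦ (hindepεX.comp (measurable_pi_apply i) (measurable_pi_apply i)).symm) hXlaw hc.le
    hcfX measurableSet_Ioi hp.le fun i ↦ (((hεid i).measure_mem_eq measurableSet_Ioi).trans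
      (measure_preimage_Ioi_eq_ofReal_one_sub (hεmeas 0) hF₀ _)).ge
  refine tendsto_of_tendsto_of_tendsto_of_le_of_le' tendsto_const_nhds
    (ENNReal.ofReal_zero ▸ ENNReal.tendsto_ofReal
      (tendsto_natCeil_inv_mul_exp_neg hbpos hb0 hblog (mul_pos hc hp)))
    (Eventually.of_forall fun _ ↦ zero_le) ?_
  filter_upwards [hb0.eventually (eventually_le_nhds hr)] with n hbr
  refine (measure_mono_ae (hae.mono fun ω hω hlt ↦ ?_)).trans (hbad ⌈1 / b n⌉₊ n)
  obtain ⟨k, hk, hempty⟩ := exists_gridCell_forall_notMem_of_lt_iSup (X · ω) (ε · ω)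
    (Λ₀ <| Y · ω) h₀ n _ (b n) δ (hmodel · ω) (hK n)
    ((one_div_le (Nat.cast_pos.2 (hK n)) (hbpos n)).2 (Nat.le_ceil _)) hδ.le
    (fun x hx y hy hxy ↦ hmod x hx y hy (hxy.trans hbr)) (fun i _ ↦ (hω i).1)
    (fun i _ ↦ (hω i).2) hlt
  exact mem_biUnion (Finset.mem_range.2 hk)
    (mem_iInter₂.2 fun i hi ↦ hempty i (Finset.mem_range.1 hi))

/-- **Uniform consistency of the local constant boundary estimator (random design).**
Under assumptions (A1)–(A4), the estimator
`h̃₀(x) = max{Λ₀(Y_i) : i ≤ n, |X_i − x| ≤ b_n}` (computed in the extended reals, so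
that `max ∅ = ⊥`) satisfies `sup_{x ∈ [0,1]} |h̃₀(x) − h₀(x)| = o_P(1)`:  for every
`δ > 0`, `P(sup_{x ∈ [0,1]} |h̃₀(x) − h₀(x)| > δ) → 0` as `n → ∞`.  (Here
`|A − B|` is expressed in `EReal` as `max (A − B) (B − A)`.) -/
theorem boundary_estimator_uniform_consistency_random_design
    {Ω : Type} [MeasureSpace Ω] [IsProbabilityMeasure (ℙ : Measure Ω)]
    (X Y ε : ℕ → Ω → ℝ) (Λ₀ h₀ F₀ fX : ℝ → ℝ) (b : ℕ → ℝ)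
    -- Λ₀ is strictly increasing and continuous
    (hΛ₀mono : StrictMono Λ₀) (hΛ₀cont : Continuous Λ₀)
    -- (A1): model with i.i.d. errors, F₀(0) = 1, F₀(−Δ) < 1 for Δ > 0,
    -- errors independent of covariates
    (hmodel : ∀ i ω, Λ₀ (Y i ω) = h₀ (X i ω) + ε i ω)
    (hεmeas : ∀ i, Measurable (ε i))
    (hεiid : iIndepFun ε ℙ)
    (hεid : ∀ i, IdentDistrib (ε i) (ε 0) ℙ ℙ)
    (hF₀ : ∀ t, F₀ t = (ℙ {ω | ε 0 ω ≤ t}).toReal)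
    (hF₀zero : F₀ 0 = 1)
    (hF₀lt : ∀ d : ℝ, 0 < d → F₀ (-d) < 1)
    (hindepεX : IndepFun (fun ω i => ε i ω) (fun ω i => X i ω) ℙ)
    -- (A2): covariates i.i.d. with density f_X continuous and bounded away
    -- from zero on its support [0,1]
    (hXmeas : ∀ i, Measurable (X i))
    (hXiid : iIndepFun X ℙ)
    (hXlaw : ∀ i, Measure.map (X i) ℙ =
      (volume.restrict (Set.Icc (0 : ℝ) 1)).withDensity (fun t => ENNReal.ofReal (fX t)))
    (hfXcont : ContinuousOn fX (Set.Icc 0 1))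
    (hfXpos : ∃ c > (0 : ℝ), ∀ t ∈ Set.Icc (0 : ℝ) 1, c ≤ fX t)
    -- (A3): h₀ continuous on [0,1]
    (hh₀ : ContinuousOn h₀ (Set.Icc 0 1))
    -- (A4): b_n > 0, b_n → 0, (log n)/(n b_n) → 0
    (hbpos : ∀ n, 0 < b n) (hb0 : Tendsto b atTop (𝓝 0))
    (hblog : Tendsto (fun n : ℕ => Real.log n / (n * b n)) atTop (𝓝 0)) :
    ∀ δ : ℝ, 0 < δ →
      Tendsto
        (fun n : ℕ => ℙ {ω : Ω |
          (δ : EReal) < ⨆ t : Set.Icc (0 : ℝ) 1,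
            max
              ((⨆ i : {i : ℕ // i < n ∧ |X i ω - (t : ℝ)| ≤ b n},
                  ((Λ₀ (Y (i : ℕ) ω) : ℝ) : EReal)) - ((h₀ t : ℝ) : EReal))
              (((h₀ t : ℝ) : EReal) -
                ⨆ i : {i : ℕ // i < n ∧ |X i ω - (t : ℝ)| ≤ b n},
                  ((Λ₀ (Y (i : ℕ) ω) : ℝ) : EReal))})
        atTop (𝓝 0) :=
  boundary_estimator_uniform_consistency_random_design_general X Y ε Λ₀ h₀ F₀ fX b hmodel hεmeas
    hεiid hεid hF₀ hF₀zero hF₀lt hindepεX hXmeas hXiid hXlaw hfXpos hh₀ hbpos hb0 hblog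
end

section
/- Uniform lower bound on local covariate counts: under assumptions (A2) and (A4) there exists a constant C > 0 such that P( inf_{x∈[0,1]} Σ_{i=1}^n 1{|X_i − x| ≤ b_n} ≥ C n b_n ) → 1 as n → ∞; that is, with probability tending to one, every interval [x − b_n, x + b_n] with x ∈ [0,1] contains at least C n b_n of the covariates X_1,…,X_n. -/
/-!
Cover `[0, 1]` by the grid of mesh `bₙ / 2`, which has at most `2 / bₙ + 1` points. A window
`[t - bₙ, t + bₙ]` contains the window of radius `bₙ / 2` around a grid point, and the number of
covariates in the latter is a sum of `n` independent indicators of probability at least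
`c bₙ / 2`, where `c` is a lower bound for the density. The multiplicative Chernoff bound makes
it smaller than `c n bₙ / 8` with probability at most `exp (-c n bₙ / 8)`, so by the union bound
some window is sparse with probability at most `(2 / bₙ + 1) exp (-c n bₙ / 8)`. This tends to
zero because `n bₙ / log n → ∞`.
-/

open MeasureTheory ProbabilityTheory Filter Topology
open scoped ENNReal

open Real Finset

section Chernoff

variable {Ω β ι : Type*} [MeasurableSpace Ω] [MeasurableSpace β] {μ : Measure Ω}
  [IsProbabilityMeasure μ]

lemma mgf_indicator_one_comp {X : Ω → β} (hX : Measurable X) {s : Set β} (hs : MeasurableSet s)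
    (τ : ℝ) : mgf (s.indicator 1 ∘ X) μ τ = 1 + (exp τ - 1) * μ.real (X ⁻¹' s) := by
  have h_exp : (fun ω => exp (τ * (s.indicator 1 ∘ X) ω))
      = fun ω => (X ⁻¹' s).indicator (fun _ => exp τ - 1) ω + 1 := by
    funext ω
    by_cases hω : X ω ∈ s <;> simp [hω]
  rw [mgf, h_exp, integral_add ((integrable_const _).indicator (hX hs)) (integrable_const 1),
    integral_indicator_const _ (hX hs), integral_const, probReal_univ, smul_eq_mul, one_smul]
  ring

/-- Chernoff's bound at the exponent `-log 2`, where the moment generating function of an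
indicator of probability `p` is `1 - p / 2 ≤ exp (-p / 2)`. -/
lemma measureReal_card_filter_mem_le_le {X : ι → Ω → β} (hX : ∀ i, Measurable (X i))
    (hind : iIndepFun X μ) {s : Set β} [DecidablePred (· ∈ s)] (hs : MeasurableSet s) {q : ℝ}
    (hq : ∀ i, q ≤ μ.real (X i ⁻¹' s)) (I : Finset ι) (a : ℝ) :
    μ.real {ω | (#{i ∈ I | X i ω ∈ s} : ℝ) ≤ a} ≤ exp (log 2 * a - q / 2 * #I) := by
  set Y : ι → Ω → ℝ := fun i => s.indicator 1 ∘ X i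
  have hY : ∀ i, Measurable (Y i) := fun i => (measurable_one.indicator hs).comp (hX i)
  have h_count : ∀ ω, (∑ i ∈ I, Y i) ω = #{i ∈ I | X i ω ∈ s} := by
    intro ω
    simp [Y, Finset.sum_apply, Set.indicator_apply]
  have h_mgf : ∀ i, mgf (Y i) μ (-log 2) ≤ exp (-(q / 2)) := by
    intro i
    rw [mgf_indicator_one_comp (hX i) hs, exp_neg, exp_log two_pos]
    linarith [add_one_le_exp (-(q / 2)), hq i]
  have h_int : Integrable (fun ω => exp (-log 2 * (∑ i ∈ I, Y i) ω)) μ := by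
    refine integrable_exp_mul_of_mem_Icc (a := 0) (b := #I)
      (I.aemeasurable_sum fun i _ => (hY i).aemeasurable) (ae_of_all _ fun ω => ?_)
    rw [h_count]
    exact ⟨by positivity, mod_cast card_filter_le _ _⟩
  calc μ.real {ω | (#{i ∈ I | X i ω ∈ s} : ℝ) ≤ a}
      = μ.real {ω | (∑ i ∈ I, Y i) ω ≤ a} := by simp only [h_count]
    _ ≤ exp (-(-log 2) * a) * ∏ i ∈ I, mgf (Y i) μ (-log 2) := by
      rw [← (hind.comp _ fun _ => measurable_one.indicator hs).mgf_sum hY]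
      exact measure_le_le_exp_mul_mgf a (neg_nonpos.mpr (log_nonneg one_le_two)) h_int
    _ ≤ exp (log 2 * a) * ∏ _i ∈ I, exp (-(q / 2)) := by
      rw [neg_neg]
      gcongr with i
      exacts [fun i _ => mgf_nonneg, h_mgf i]
    _ = exp (log 2 * a - q / 2 * #I) := by
      rw [prod_const, ← exp_nat_mul, ← exp_add]
      ring_nf

end Chernoff

lemma ofReal_mul_le_withDensity_closedBall {f : ℝ → ℝ} {c t r : ℝ} (hc : 0 ≤ c)
    (hf : ∀ x ∈ Set.Icc (0 : ℝ) 1, c ≤ f x) (ht : t ∈ Set.Icc (0 : ℝ) 1) (hr0 : 0 ≤ r)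
    (hr1 : r ≤ 1) :
    ENNReal.ofReal (c * r) ≤
      (volume.restrict (Set.Icc (0 : ℝ) 1)).withDensity (fun x => ENNReal.ofReal (f x))
        (Metric.closedBall t r) := by
  set u := min t (1 - r)
  have h_unit : Set.Icc u (u + r) ⊆ Set.Icc 0 1 :=
    Set.Icc_subset_Icc (le_min ht.1 (by linarith)) (by linarith [min_le_right t (1 - r)])
  have h_ball : Set.Icc u (u + r) ⊆ Metric.closedBall t r := by
    rw [Real.closedBall_eq_Icc]
    exact Set.Icc_subset_Icc (le_min (by linarith) (by linarith [ht.2]))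
      (by linarith [min_le_left t (1 - r)])
  calc ENNReal.ofReal (c * r) = ∫⁻ _ in Set.Icc u (u + r), ENNReal.ofReal c := by
        rw [setLIntegral_const, Real.volume_Icc, add_sub_cancel_left, ENNReal.ofReal_mul hc]
    _ ≤ ∫⁻ x in Set.Icc u (u + r), ENNReal.ofReal (f x) :=
        setLIntegral_mono' measurableSet_Icc fun x hx =>
          ENNReal.ofReal_le_ofReal (hf x (h_unit hx))
    _ = (volume.restrict (Set.Icc (0 : ℝ) 1)).withDensity (fun x => ENNReal.ofReal (f x))
          (Set.Icc u (u + r)) := by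
        rw [withDensity_apply _ measurableSet_Icc, Measure.restrict_restrict measurableSet_Icc,
          Set.inter_eq_left.mpr h_unit]
    _ ≤ _ := measure_mono h_ball

section UnitGrid

/-- For `h > 0`, the multiples of `h` lying in `[0, 1]`. -/
noncomputable def unitGrid (h : ℝ) : Finset ℝ :=
  (range (⌊1 / h⌋₊ + 1)).image fun j : ℕ => j * h

variable {h : ℝ}

lemma mem_Icc_of_mem_unitGrid (hh : 0 < h) {s : ℝ} (hs : s ∈ unitGrid h) :
    s ∈ Set.Icc (0 : ℝ) 1 := by
  obtain ⟨j, hj, rfl⟩ := Finset.mem_image.mp hs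
  have hj' : (j : ℝ) ≤ 1 / h :=
    (Nat.cast_le.mpr (Nat.lt_succ_iff.mp (mem_range.mp hj))).trans (Nat.floor_le (by positivity))
  exact ⟨by positivity, (le_div_iff₀ hh).mp (by simpa using hj')⟩

lemma exists_mem_unitGrid_abs_sub_le (hh : 0 < h) {t : ℝ} (ht : t ∈ Set.Icc (0 : ℝ) 1) :
    ∃ s ∈ unitGrid h, |t - s| ≤ h := by
  refine ⟨⌊t / h⌋₊ * h, mem_image_of_mem _ (mem_range.mpr (Nat.lt_succ_of_le ?_)), ?_⟩
  · exact Nat.floor_mono (div_le_div_of_nonneg_right ht.2 hh.le)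
  · have h_le : (⌊t / h⌋₊ : ℝ) * h ≤ t :=
      (le_div_iff₀ hh).mp (Nat.floor_le (div_nonneg ht.1 hh.le))
    have h_lt : t < (⌊t / h⌋₊ + 1) * h := (div_lt_iff₀ hh).mp (Nat.lt_floor_add_one _)
    rw [abs_of_nonneg (by linarith)]
    linarith

lemma card_unitGrid_le (hh : 0 < h) : (#(unitGrid h) : ℝ) ≤ 1 / h + 1 := by
  calc (#(unitGrid h) : ℝ) ≤ ⌊1 / h⌋₊ + 1 := by
        exact_mod_cast card_image_le.trans (card_range _).le
    _ ≤ 1 / h + 1 := by gcongr; exact Nat.floor_le (by positivity)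

end UnitGrid

lemma card_filter_abs_sub_le_mono {ι : Type*} (I : Finset ι) (x : ι → ℝ) {s t r R : ℝ}
    (h : |t - s| + r ≤ R) : #{i ∈ I | |x i - s| ≤ r} ≤ #{i ∈ I | |x i - t| ≤ R} :=
  card_le_card <| monotone_filter_right _ fun i _ (hi : |x i - s| ≤ r) =>
    (abs_sub_le (x i) s t).trans (by rw [abs_sub_comm s t]; linarith)

/-- Once `2 log n ≤ β n bₙ`, the factor `exp (-β n bₙ)` is at most `n⁻²` while `2 / bₙ ≤ β n`. -/
lemma tendsto_two_div_add_one_mul_exp_neg {b : ℕ → ℝ} {β : ℝ} (hβ : 0 < β)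
    (hb : ∀ n, 0 < b n) (hblog : Tendsto (fun n : ℕ => log n / (n * b n)) atTop (𝓝 0)) :
    Tendsto (fun n : ℕ => (2 / b n + 1) * exp (-(β * (n * b n)))) atTop (𝓝 0) := by
  refine squeeze_zero' (Eventually.of_forall fun n => by have := hb n; positivity) ?_
    (tendsto_const_div_atTop_nhds_zero_nat (β + 1))
  filter_upwards [hblog.eventually (ge_mem_nhds (half_pos hβ)), eventually_ge_atTop 3]
    with n h_ratio hn3
  have hn3' : (3 : ℝ) ≤ n := by exact_mod_cast hn3
  have hn : (0 : ℝ) < n := by positivity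
  have h_log_one : 1 ≤ log n := by
    rw [le_log_iff_exp_le hn]
    linarith [exp_one_lt_d9]
  have h_log : 2 * log n ≤ β * (n * b n) := by
    have := (div_le_iff₀ (mul_pos hn (hb n))).mp h_ratio
    linarith
  have h_exp : exp (-(β * (n * b n))) ≤ 1 / n ^ 2 := by
    calc exp (-(β * (n * b n))) ≤ exp (-(2 * log n)) := exp_le_exp.mpr (by linarith)
      _ = 1 / n ^ 2 := by rw [exp_neg, ← log_rpow hn, exp_log (by positivity)]; norm_num
  have h_inv : 2 / b n ≤ β * n := by
    rw [div_le_iff₀ (hb n)]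
    linarith
  calc (2 / b n + 1) * exp (-(β * (n * b n))) ≤ (β * n + 1) * (1 / n ^ 2) := by
        gcongr
    _ ≤ (β + 1) / n := by
        rw [le_div_iff₀ hn]
        field_simp
        nlinarith

section Window

variable {Ω ι : Type*} [MeasurableSpace Ω] {μ : Measure Ω} [IsProbabilityMeasure μ]
  {X : ι → Ω → ℝ} {f : ℝ → ℝ} {c : ℝ}

lemma measureReal_card_filter_abs_sub_le_le (hX : ∀ i, Measurable (X i))
    (hind : iIndepFun X μ)
    (hlaw : ∀ i, μ.map (X i) =
      (volume.restrict (Set.Icc (0 : ℝ) 1)).withDensity (fun x => ENNReal.ofReal (f x)))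
    (hc : 0 ≤ c) (hf : ∀ x ∈ Set.Icc (0 : ℝ) 1, c ≤ f x) {s r : ℝ}
    (hs : s ∈ Set.Icc (0 : ℝ) 1) (hr0 : 0 ≤ r) (hr1 : r ≤ 1) (I : Finset ι) :
    μ.real {ω | (#{i ∈ I | |X i ω - s| ≤ r} : ℝ) ≤ c / 4 * #I * r} ≤
      exp (-(c / 4 * #I * r)) := by
  classical
  have hq : ∀ i, c * r ≤ μ.real (X i ⁻¹' Metric.closedBall s r) := by
    intro i
    rw [measureReal_def, ← ENNReal.ofReal_le_iff_le_toReal (measure_ne_top _ _),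
      ← Measure.map_apply (hX i) Metric.isClosed_closedBall.measurableSet, hlaw i]
    exact ofReal_mul_le_withDensity_closedBall hc hf hs hr0 hr1
  have h_exponent : log 2 * (c / 4 * #I * r) - c * r / 2 * #I ≤ -(c / 4 * #I * r) := by
    have : 0 ≤ c / 4 * #I * r := by positivity
    nlinarith [log_two_lt_d9]
  calc μ.real {ω | (#{i ∈ I | |X i ω - s| ≤ r} : ℝ) ≤ c / 4 * #I * r}
      = μ.real {ω | (#{i ∈ I | X i ω ∈ Metric.closedBall s r} : ℝ) ≤ c / 4 * #I * r} := by
        simp only [Metric.mem_closedBall, Real.dist_eq]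
    _ ≤ exp (log 2 * (c / 4 * #I * r) - c * r / 2 * #I) :=
        measureReal_card_filter_mem_le_le hX hind Metric.isClosed_closedBall.measurableSet hq I _
    _ ≤ exp (-(c / 4 * #I * r)) := exp_le_exp.mpr h_exponent

/-- A window `[t - b, t + b]` with few points contains a window `[s - b/2, s + b/2]` with few
points around a point `s` of the grid of mesh `b/2`. -/
lemma measureReal_exists_sparse_window_le (hX : ∀ i, Measurable (X i)) (hind : iIndepFun X μ)
    (hlaw : ∀ i, μ.map (X i) =
      (volume.restrict (Set.Icc (0 : ℝ) 1)).withDensity (fun x => ENNReal.ofReal (f x)))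
    (hc : 0 ≤ c) (hf : ∀ x ∈ Set.Icc (0 : ℝ) 1, c ≤ f x) {b : ℝ} (hb0 : 0 < b) (hb2 : b ≤ 2)
    (I : Finset ι) :
    μ.real {ω | ∀ t ∈ Set.Icc (0 : ℝ) 1, c / 8 * #I * b ≤ #{i ∈ I | |X i ω - t| ≤ b}}ᶜ ≤
      (2 / b + 1) * exp (-(c / 8 * (#I * b))) := by
  have hh : 0 < b / 2 := half_pos hb0
  have h_cover :
      {ω | ∀ t ∈ Set.Icc (0 : ℝ) 1, c / 8 * #I * b ≤ #{i ∈ I | |X i ω - t| ≤ b}}ᶜ ⊆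
        ⋃ s ∈ unitGrid (b / 2),
          {ω | (#{i ∈ I | |X i ω - s| ≤ b / 2} : ℝ) ≤ c / 4 * #I * (b / 2)} := by
    intro ω hω
    simp only [Set.mem_compl_iff, Set.mem_ofPred_eq, not_forall, not_le] at hω
    obtain ⟨t, ht, h_sparse⟩ := hω
    obtain ⟨s, hs, hts⟩ := exists_mem_unitGrid_abs_sub_le hh ht
    have h_sub : (#{i ∈ I | |X i ω - s| ≤ b / 2} : ℝ) ≤ #{i ∈ I | |X i ω - t| ≤ b} :=
      mod_cast card_filter_abs_sub_le_mono I (X · ω) (by linarith)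
    exact Set.mem_biUnion hs (by simp only [Set.mem_ofPred_eq]; linarith)
  calc _ ≤ ∑ s ∈ unitGrid (b / 2),
        μ.real {ω | (#{i ∈ I | |X i ω - s| ≤ b / 2} : ℝ) ≤ c / 4 * #I * (b / 2)} :=
        (measureReal_mono h_cover (measure_ne_top _ _)).trans (measureReal_biUnion_finset_le _ _)
    _ ≤ ∑ _s ∈ unitGrid (b / 2), exp (-(c / 4 * #I * (b / 2))) := sum_le_sum fun s hs =>
        measureReal_card_filter_abs_sub_le_le hX hind hlaw hc hf
          (mem_Icc_of_mem_unitGrid hh hs) hh.le (by linarith) I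
    _ = #(unitGrid (b / 2)) * exp (-(c / 8 * (#I * b))) := by
        rw [sum_const, nsmul_eq_mul]
        ring_nf
    _ ≤ (2 / b + 1) * exp (-(c / 8 * (#I * b))) := by
        gcongr
        simpa only [one_div_div] using card_unitGrid_le hh

end Window

lemma tendsto_measure_nhds_one_of_tendsto_measureReal_compl {Ω ι : Type*} [MeasurableSpace Ω]
    {μ : Measure Ω} [IsProbabilityMeasure μ] {l : Filter ι} {s : ι → Set Ω}
    (h : Tendsto (fun i => μ.real (s i)ᶜ) l (𝓝 0)) : Tendsto (fun i => μ (s i)) l (𝓝 1) := by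
  have h_compl : Tendsto (fun i => μ (s i)ᶜ) l (𝓝 0) := by
    simpa only [ofReal_measureReal (measure_ne_top _ _), ENNReal.ofReal_zero]
      using ENNReal.tendsto_ofReal h
  refine tendsto_of_tendsto_of_tendsto_of_le_of_le (g := fun i => 1 - μ (s i)ᶜ) ?_
    tendsto_const_nhds (fun i => ?_) (fun i => prob_le_one)
  · simpa using ENNReal.Tendsto.sub tendsto_const_nhds h_compl (Or.inl ENNReal.one_ne_top)
  · rw [tsub_le_iff_right, ← measure_univ (μ := μ), ← Set.union_compl_self (s i)]
    exact measure_union_le _ _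

theorem local_covariate_count_lower_bound_general
    {Ω : Type} [MeasureSpace Ω] [IsProbabilityMeasure (ℙ : Measure Ω)]
    (X : ℕ → Ω → ℝ) (fX : ℝ → ℝ) (b : ℕ → ℝ)
    -- (A2): X_1, X_2, … are i.i.d. with density f_X, continuous and bounded
    -- away from zero on its support [0,1]
    (hXmeas : ∀ i, Measurable (X i))
    (hXiid : iIndepFun X ℙ)
    (hXlaw : ∀ i, Measure.map (X i) ℙ =
      (volume.restrict (Set.Icc (0 : ℝ) 1)).withDensity (fun t => ENNReal.ofReal (fX t)))
    (hfXpos : ∃ c > (0 : ℝ), ∀ t ∈ Set.Icc (0 : ℝ) 1, c ≤ fX t)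
    -- (A4): b_n > 0, b_n → 0 and (log n)/(n b_n) → 0
    (hbpos : ∀ n, 0 < b n) (hb0 : Tendsto b atTop (𝓝 0))
    (hblog : Tendsto (fun n : ℕ => Real.log n / (n * b n)) atTop (𝓝 0)) :
    ∃ C : ℝ, 0 < C ∧
      Tendsto
        (fun n : ℕ => ℙ {ω : Ω | ∀ t ∈ Set.Icc (0 : ℝ) 1,
            C * n * b n ≤
              (((Finset.range n).filter (fun i => |X i ω - t| ≤ b n)).card : ℝ)})
        atTop (𝓝 1) := by
  obtain ⟨c, hc, hcf⟩ := hfXpos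
  refine ⟨c / 8, by positivity, tendsto_measure_nhds_one_of_tendsto_measureReal_compl ?_⟩
  refine squeeze_zero' (Eventually.of_forall fun n => measureReal_nonneg) ?_
    (tendsto_two_div_add_one_mul_exp_neg (β := c / 8) (by positivity) hbpos hblog)
  filter_upwards [hb0.eventually (ge_mem_nhds two_pos)] with n hbn
  simpa only [card_range] using
    measureReal_exists_sparse_window_le hXmeas hXiid hXlaw hc.le hcf (hbpos n) hbn (range n)

/-- **Uniform lower bound on local covariate counts.**
Under assumptions (A2) and (A4) there exists a constant `C > 0` such that
`P( inf_{x ∈ [0,1]} Σ_{i=1}^n 1{|X_i − x| ≤ b_n} ≥ C n b_n ) → 1` as `n → ∞`: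
with probability tending to one, every interval `[x − b_n, x + b_n]`, `x ∈ [0,1]`,
contains at least `C n b_n` of the covariates `X_1,…,X_n`. -/
theorem local_covariate_count_lower_bound
    {Ω : Type} [MeasureSpace Ω] [IsProbabilityMeasure (ℙ : Measure Ω)]
    (X : ℕ → Ω → ℝ) (fX : ℝ → ℝ) (b : ℕ → ℝ)
    -- (A2): X_1, X_2, … are i.i.d. with density f_X, continuous and bounded
    -- away from zero on its support [0,1]
    (hXmeas : ∀ i, Measurable (X i))
    (hXiid : iIndepFun X ℙ)
    (hXlaw : ∀ i, Measure.map (X i) ℙ =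
      (volume.restrict (Set.Icc (0 : ℝ) 1)).withDensity (fun t => ENNReal.ofReal (fX t)))
    (hfXcont : ContinuousOn fX (Set.Icc 0 1))
    (hfXpos : ∃ c > (0 : ℝ), ∀ t ∈ Set.Icc (0 : ℝ) 1, c ≤ fX t)
    -- (A4): b_n > 0, b_n → 0 and (log n)/(n b_n) → 0
    (hbpos : ∀ n, 0 < b n) (hb0 : Tendsto b atTop (𝓝 0))
    (hblog : Tendsto (fun n : ℕ => Real.log n / (n * b n)) atTop (𝓝 0)) :
    ∃ C : ℝ, 0 < C ∧
      Tendsto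
        (fun n : ℕ => ℙ {ω : Ω | ∀ t ∈ Set.Icc (0 : ℝ) 1,
            C * n * b n ≤
              (((Finset.range n).filter (fun i => |X i ω - t| ≤ b n)).card : ℝ)})
        atTop (𝓝 1) :=
  local_covariate_count_lower_bound_general X fX b hXmeas hXiid hXlaw hfXpos hbpos hb0 hblog
end

section
/- Uniform consistency of the local constant boundary estimator (fixed design): under assumptions (A1'), (A2'), (A3) and (A4'), the estimator h̃₀ given by h̃₀(x) = max{Λ₀(Y_{i,n}) : 1 ≤ i ≤ n, |x_{i,n} − x| ≤ b_n} satisfies ‖h̃₀ − h₀‖_∞ = sup_{x∈[0,1]} |h̃₀(x) − h₀(x)| = o_P(1) as n → ∞. -/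
/-!
On the event that all errors are `≤ 0` (probability one, as `F₀ 0 = 1`), uniform continuity of
`h₀` bounds `h̃₀ - h₀` above by `δ / 2` as soon as `b_n` is small. For the lower bound, cover
`[0, 1]` by about `2 / b_n` windows, each containing a block of `m_n = ⌊b_n / (4 Δ̄_n)⌋` design
points in pairwise disjoint cells of length `Δ̄_n`. The bound `h̃₀ ≥ h₀ - δ` can only fail if in
some block every error is `≤ -δ / 2`, which by independence has probability at most `ρ ^ m_n`
with `ρ < 1`. Since `m_n / log n → ∞` and `1 / b_n = O(n)`, the union bound
`(2 / b_n + 1) ρ ^ m_n` tends to `0`.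
-/

open MeasureTheory ProbabilityTheory Filter Topology
open scoped ENNReal

section Design

variable {ξ : ℕ → ℝ} {n : ℕ} {D : ℝ}

lemma mem_Icc_of_le_succ (h0 : ξ 0 = 0) (h1 : ξ (n + 1) = 1)
    (hmono : ∀ i ≤ n, ξ i < ξ (i + 1)) {i : ℕ} (hi : i ≤ n + 1) : ξ i ∈ Set.Icc 0 1 := by
  have hs : StrictMonoOn ξ (Set.Iic (n + 1)) :=
    strictMonoOn_Iic_of_lt_succ fun m hm => by simpa using hmono m (Nat.lt_succ_iff.mp hm)
  rw [← h0, ← h1]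
  exact ⟨hs.monotoneOn (Nat.zero_le _) hi (Nat.zero_le i),
    hs.monotoneOn hi (Set.mem_Iic.mpr le_rfl) hi⟩

lemma one_le_succ_mul_of_gap_le (h0 : ξ 0 = 0) (h1 : ξ (n + 1) = 1)
    (hgap : ∀ i ≤ n, ξ (i + 1) - ξ i ≤ D) : 1 ≤ (n + 1) * D := by
  have htel := Finset.sum_range_sub ξ (n + 1)
  have hle : ∑ i ∈ Finset.range (n + 1), (ξ (i + 1) - ξ i) ≤ ∑ _i ∈ Finset.range (n + 1), D :=
    Finset.sum_le_sum fun i hi => hgap i (Nat.lt_succ_iff.mp (Finset.mem_range.mp hi))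
  rw [htel, h0, h1, Finset.sum_const, Finset.card_range, nsmul_eq_mul] at hle
  push_cast at hle
  linarith

lemma exists_mem_Ioc_of_gap_le (h0 : ξ 0 = 0) (h1 : ξ (n + 1) = 1)
    (hgap : ∀ i ≤ n, ξ (i + 1) - ξ i ≤ D) (hD : 0 ≤ D) {u : ℝ} (hu : 0 ≤ u) (huD : u + D < 1) :
    ∃ i, 1 ≤ i ∧ i ≤ n ∧ ξ i ∈ Set.Ioc u (u + D) := by
  classical
  have hex : ∃ i, u < ξ i := ⟨n + 1, by linarith⟩
  set i := Nat.find hex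
  have hui : u < ξ i := Nat.find_spec hex
  have hi0 : i ≠ 0 := fun h => by rw [h, h0] at hui; linarith
  have hin : i ≤ n + 1 := Nat.find_min' hex (by linarith)
  have hprev : ξ (i - 1) ≤ u := not_lt.mp (Nat.find_min hex (by omega))
  have hiD : ξ i ≤ u + D := by
    have := hgap (i - 1) (by omega)
    rw [Nat.sub_add_cancel (Nat.one_le_iff_ne_zero.mpr hi0)] at this
    linarith
  have hin' : i ≠ n + 1 := fun h => by rw [h, h1] at hiD; linarith
  exact ⟨i, by omega, by omega, hui, hiD⟩

lemma exists_finset_card_eq_mem_Ioc (h0 : ξ 0 = 0) (h1 : ξ (n + 1) = 1)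
    (hgap : ∀ i ≤ n, ξ (i + 1) - ξ i ≤ D) (hD : 0 < D) {u : ℝ} {m : ℕ} (hu : 0 ≤ u)
    (hum : u + m * D < 1) :
    ∃ T : Finset (Fin n), T.card = m ∧ ∀ i ∈ T, ξ (i + 1) ∈ Set.Ioc u (u + m * D) := by
  have hcell : ∀ j : Fin m, ∃ i, 1 ≤ i ∧ i ≤ n ∧ ξ i ∈ Set.Ioc (u + j * D) (u + j * D + D) := by
    intro j
    have hj : (j : ℝ) + 1 ≤ m := by exact_mod_cast j.isLt
    exact exists_mem_Ioc_of_gap_le h0 h1 hgap hD.le (by positivity) (by nlinarith)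
  choose idx hidx1 hidxn hidx using hcell
  let g : Fin m → Fin n := fun j => ⟨idx j - 1, by have := hidx1 j; have := hidxn j; omega⟩
  have hg : ∀ j, (g j : ℕ) + 1 = idx j := fun j => Nat.sub_add_cancel (hidx1 j)
  -- distinct cells are disjoint, so they contain distinct design points
  have hle : ∀ j j', idx j = idx j' → (j : ℕ) ≤ j' := by
    intro j j' hjj
    have hlo := (hidx j).1
    have hhi := (hidx j').2
    rw [hjj] at hlo
    have : (j : ℝ) * D < (j' + 1) * D := by linarith
    exact Nat.lt_succ_iff.mp (by exact_mod_cast lt_of_mul_lt_mul_right this hD.le)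
  have hinj : Function.Injective g := fun j j' hjj => by
    have : idx j = idx j' := by rw [← hg, ← hg, hjj]
    exact Fin.ext (le_antisymm (hle j j' this) (hle j' j this.symm))
  refine ⟨Finset.univ.map ⟨g, hinj⟩, by simp, ?_⟩
  simp only [Finset.mem_map, Finset.mem_univ, true_and, Function.Embedding.coeFn_mk]
  rintro _ ⟨j, rfl⟩
  have hj : (j : ℝ) + 1 ≤ m := by exact_mod_cast j.isLt
  rw [hg]
  obtain ⟨hlo, hhi⟩ := hidx j
  exact ⟨by nlinarith, by nlinarith⟩

lemma exists_grid_block_subset_window {b t : ℝ} (hb : 0 < b) (hb1 : b ≤ 1)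
    (ht : t ∈ Set.Icc (0 : ℝ) 1) :
    ∃ k ≤ ⌈2 / b⌉₊, (k : ℝ) * b / 2 + b / 4 < 1 ∧ t - b ≤ k * b / 2 ∧
      (k : ℝ) * b / 2 + b / 4 ≤ t + b := by
  -- shift `t` left of `1 - b` so that the block to its right still fits into `[0, 1)`
  set a := min t (1 - b) with ha
  have ha0 : 0 ≤ a := le_min ht.1 (by linarith)
  have hat : a ≤ t := min_le_left _ _
  have ha1 : a ≤ 1 - b := min_le_right _ _
  have hta : t - b ≤ a := by
    rcases le_total t (1 - b) with h | h
    · rw [ha, min_eq_left h]; linarith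
    · rw [ha, min_eq_right h]; linarith [ht.2]
  refine ⟨⌈2 * a / b⌉₊, Nat.ceil_le_ceil ?_, ?_⟩
  · gcongr; linarith [ht.2]
  have hlo : 2 * a / b ≤ ⌈2 * a / b⌉₊ := Nat.le_ceil _
  have hhi : (⌈2 * a / b⌉₊ : ℝ) < 2 * a / b + 1 := Nat.ceil_lt_add_one (by positivity)
  rw [div_le_iff₀ hb] at hlo
  have hhi' : (⌈2 * a / b⌉₊ : ℝ) * b < 2 * a + b := by
    have := mul_lt_mul_of_pos_right hhi hb
    rwa [add_mul, div_mul_cancel₀ _ hb.ne', one_mul] at this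
  exact ⟨by linarith, by linarith, by linarith⟩

lemma exists_covering_blocks (h0 : ξ 0 = 0) (h1 : ξ (n + 1) = 1)
    (hgap : ∀ i ≤ n, ξ (i + 1) - ξ i ≤ D) (hD : 0 < D) {b : ℝ} (hb : 0 < b) (hb1 : b ≤ 1) :
    ∃ 𝒯 : Finset (Finset (Fin n)), 𝒯.card ≤ ⌈2 / b⌉₊ + 1 ∧
      (∀ T ∈ 𝒯, T.card = ⌊b / (4 * D)⌋₊) ∧
      ∀ t ∈ Set.Icc (0 : ℝ) 1, ∃ T ∈ 𝒯, ∀ i ∈ T, |ξ (i + 1) - t| ≤ b := by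
  classical
  set m := ⌊b / (4 * D)⌋₊
  have hmD : m * D ≤ b / 4 := by
    have := Nat.floor_le (a := b / (4 * D)) (by positivity)
    rw [le_div_iff₀ (by positivity)] at this
    linarith
  have hblock : ∀ k : ℕ, ∃ T : Finset (Fin n), (k : ℝ) * b / 2 + b / 4 < 1 →
      T.card = m ∧ ∀ i ∈ T, ξ (i + 1) ∈ Set.Ioc (k * b / 2) (k * b / 2 + b / 4) := by
    intro k
    by_cases hk : (k : ℝ) * b / 2 + b / 4 < 1
    · obtain ⟨T, hT, hmem⟩ :=
        exists_finset_card_eq_mem_Ioc h0 h1 hgap hD (u := k * b / 2) (m := m) (by positivity)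
          (by linarith)
      exact ⟨T, fun _ => ⟨hT, fun i hi => Set.Ioc_subset_Ioc_right (by linarith) (hmem i hi)⟩⟩
    · exact ⟨∅, fun h => absurd h hk⟩
  choose T hT using hblock
  let admissible := (Finset.range (⌈2 / b⌉₊ + 1)).filter fun k : ℕ => (k : ℝ) * b / 2 + b / 4 < 1
  refine ⟨admissible.image T, Finset.card_image_le.trans ?_, ?_, ?_⟩
  · exact (Finset.card_filter_le _ _).trans (Finset.card_range _).le
  · simp only [Finset.mem_image, Finset.mem_filter, admissible]
    rintro _ ⟨k, ⟨-, hk⟩, rfl⟩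
    exact (hT k hk).1
  · intro t ht
    obtain ⟨k, hkK, hk1, hlo, hhi⟩ := exists_grid_block_subset_window hb hb1 ht
    refine ⟨T k, Finset.mem_image_of_mem T
      (Finset.mem_filter.mpr ⟨Finset.mem_range.mpr (Nat.lt_succ_of_le hkK), hk1⟩), ?_⟩
    intro i hi
    obtain ⟨h1, h2⟩ := (hT k hk1).2 i hi
    exact abs_le.mpr ⟨by linarith, by linarith⟩

end Design

lemma EReal.max_sub_sub_le_of_forall_le_of_exists_le {ι : Type*} {w : ι → ℝ} {a d : ℝ}
    (hle : ∀ i, w i ≤ a + d) (hge : ∃ i, a - d ≤ w i) :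
    max ((⨆ i, (w i : EReal)) - a) (a - ⨆ i, (w i : EReal)) ≤ d := by
  have hS1 : (⨆ i, (w i : EReal)) ≤ ((a + d : ℝ) : EReal) :=
    iSup_le fun i => EReal.coe_le_coe_iff.mpr (hle i)
  obtain ⟨i, hi⟩ := hge
  have hS2 : ((a - d : ℝ) : EReal) ≤ ⨆ i, (w i : EReal) :=
    le_iSup_of_le i (EReal.coe_le_coe_iff.mpr hi)
  generalize (⨆ i, (w i : EReal)) = S at hS1 hS2 ⊢
  obtain ⟨s, rfl⟩ : ∃ s : ℝ, S = s :=
    ⟨S.toReal, (EReal.coe_toReal (ne_top_of_le_ne_top (EReal.coe_ne_top _) hS1)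
      (ne_bot_of_le_ne_bot (EReal.coe_ne_bot _) hS2)).symm⟩
  rw [EReal.coe_le_coe_iff] at hS1 hS2
  rw [← EReal.coe_sub, ← EReal.coe_sub]
  exact max_le (EReal.coe_le_coe_iff.mpr (by linarith)) (EReal.coe_le_coe_iff.mpr (by linarith))

lemma ProbabilityTheory.iIndepFun.measure_biUnion_biInter_preimage_le {Ω ι β : Type*}
    [MeasurableSpace Ω] [MeasurableSpace β] {μ : Measure Ω} {f : ι → Ω → β}
    (hf : iIndepFun f μ) {s : Set β} (hs : MeasurableSet s) {p : ℝ≥0∞}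
    (hp : ∀ i, μ (f i ⁻¹' s) ≤ p) {𝒯 : Finset (Finset ι)} {m : ℕ}
    (hm : ∀ T ∈ 𝒯, T.card = m) :
    μ (⋃ T ∈ 𝒯, ⋂ i ∈ T, f i ⁻¹' s) ≤ 𝒯.card * p ^ m :=
  calc μ (⋃ T ∈ 𝒯, ⋂ i ∈ T, f i ⁻¹' s)
      ≤ ∑ T ∈ 𝒯, μ (⋂ i ∈ T, f i ⁻¹' s) := measure_biUnion_finset_le _ _
    _ ≤ ∑ _T ∈ 𝒯, p ^ m := Finset.sum_le_sum fun T hT => by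
        rw [hf.measure_inter_preimage_eq_mul T fun _ _ => hs, ← hm T hT]
        exact Finset.prod_le_pow_card _ _ _ fun i _ => hp i
    _ = 𝒯.card * p ^ m := by rw [Finset.sum_const, nsmul_eq_mul]

lemma measure_lt_eq_zero_of_toReal_measure_le_eq_one {Ω : Type*} [MeasurableSpace Ω]
    {μ : Measure Ω} [IsProbabilityMeasure μ] {f : Ω → ℝ} (hf : Measurable f) {a : ℝ}
    (h : (μ {ω | f ω ≤ a}).toReal = 1) : μ {ω | a < f ω} = 0 := by
  rw [ENNReal.toReal_eq_one_iff] at h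
  simpa only [Set.compl_ofPred, not_le] using
    (prob_compl_eq_zero_iff (measurableSet_le hf measurable_const)).mpr h

lemma tendsto_natCast_mul_pow_of_log_le {ρ : ℝ} (hρ0 : 0 < ρ) (hρ1 : ρ < 1) {m : ℕ → ℕ}
    (hm : ∀ C : ℝ, ∀ᶠ n : ℕ in atTop, C * Real.log n ≤ m n) :
    Tendsto (fun n : ℕ => (n : ℝ) * ρ ^ m n) atTop (𝓝 0) := by
  have hlogρ : Real.log ρ < 0 := Real.log_neg hρ0 hρ1
  refine squeeze_zero' (Eventually.of_forall fun n => by positivity) ?_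
    tendsto_one_div_atTop_nhds_zero_nat
  filter_upwards [hm (-2 / Real.log ρ), eventually_ge_atTop 1] with n hn hn1
  have hnpos : (0 : ℝ) < n := by exact_mod_cast hn1
  -- `ρ ^ m ≤ n ^ (-2)` once `m ≥ 2 log n / |log ρ|`
  have hexp : Real.log n + m n * Real.log ρ ≤ -Real.log n := by
    have := mul_le_mul_of_nonpos_right hn hlogρ.le
    rw [div_mul_eq_mul_div, div_mul_eq_mul_div, mul_div_assoc, div_self hlogρ.ne] at this
    linarith
  calc (n : ℝ) * ρ ^ m n = Real.exp (Real.log n + m n * Real.log ρ) := by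
        rw [Real.exp_add, Real.exp_nat_mul, Real.exp_log hnpos, Real.exp_log hρ0]
    _ ≤ Real.exp (-Real.log n) := Real.exp_le_exp.mpr hexp
    _ = 1 / n := by rw [Real.exp_neg, Real.exp_log hnpos, one_div]

section Bandwidth

variable {b Δ : ℕ → ℝ}

lemma eventually_mul_log_le_floor (hb : ∀ n, 0 < b n) (hΔ : ∀ n, 0 < Δ n)
    (hlog : Tendsto (fun n : ℕ => Δ n * Real.log n / b n) atTop (𝓝 0)) (C : ℝ) :
    ∀ᶠ n : ℕ in atTop, C * Real.log n ≤ ⌊b n / (4 * Δ n)⌋₊ := by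
  set c := max C 1
  have hc : 0 < c := lt_max_of_lt_right one_pos
  filter_upwards [hlog.eventually_lt_const (by positivity : (0 : ℝ) < 1 / (8 * c)),
    (Real.tendsto_log_atTop.comp tendsto_natCast_atTop_atTop).eventually_ge_atTop 1]
    with n hn (hlogn : 1 ≤ Real.log n)
  have hbn := hb n
  have hΔn := hΔ n
  have hy : 2 * c * Real.log n ≤ b n / (4 * Δ n) := by
    rw [div_lt_iff₀ hbn, div_mul_eq_mul_div, one_mul, lt_div_iff₀ (by positivity)] at hn
    rw [le_div_iff₀ (by positivity)]
    linarith
  have hfloor := Nat.lt_floor_add_one (b n / (4 * Δ n))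
  have hCc : C * Real.log n ≤ c * Real.log n :=
    mul_le_mul_of_nonneg_right (le_max_left _ _) (by linarith)
  have hc1 : 1 ≤ c * Real.log n := one_le_mul_of_one_le_of_one_le (le_max_right _ _) hlogn
  linarith

lemma eventually_ceil_two_div_add_one_le (hb : ∀ n, 0 < b n) (hΔ : ∀ n, 0 < Δ n)
    (hspan : ∀ n : ℕ, 1 ≤ (n + 1) * Δ n)
    (hlog : Tendsto (fun n : ℕ => Δ n * Real.log n / b n) atTop (𝓝 0)) :
    ∀ᶠ n : ℕ in atTop, (⌈2 / b n⌉₊ : ℝ) + 1 ≤ 6 * n := by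
  filter_upwards [hlog.eventually_lt_const one_pos,
    (Real.tendsto_log_atTop.comp tendsto_natCast_atTop_atTop).eventually_ge_atTop 1,
    eventually_ge_atTop 1] with n hn (hlogn : 1 ≤ Real.log n) hn1
  have hbn := hb n
  have hΔn := hΔ n
  have hΔb : Δ n ≤ b n := by
    rw [div_lt_iff₀ hbn, one_mul] at hn
    nlinarith
  have hceil : (⌈2 / b n⌉₊ : ℝ) < 2 / b n + 1 := Nat.ceil_lt_add_one (by positivity)
  have hinv : 2 / b n ≤ 2 * (n + 1) := by
    rw [div_le_iff₀ hbn]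
    nlinarith [hspan n]
  have : (1 : ℝ) ≤ n := by exact_mod_cast hn1
  linarith

lemma tendsto_ceil_add_one_mul_pow_floor (hb : ∀ n, 0 < b n) (hΔ : ∀ n, 0 < Δ n)
    (hspan : ∀ n : ℕ, 1 ≤ (n + 1) * Δ n)
    (hlog : Tendsto (fun n : ℕ => Δ n * Real.log n / b n) atTop (𝓝 0))
    {ρ : ℝ} (hρ0 : 0 < ρ) (hρ1 : ρ < 1) :
    Tendsto (fun n => ((⌈2 / b n⌉₊ : ℝ) + 1) * ρ ^ ⌊b n / (4 * Δ n)⌋₊) atTop (𝓝 0) := by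
  have hlin := (tendsto_natCast_mul_pow_of_log_le hρ0 hρ1
    (eventually_mul_log_le_floor hb hΔ hlog)).const_mul 6
  rw [mul_zero] at hlin
  refine squeeze_zero' (Eventually.of_forall fun n => by positivity) ?_ hlin
  filter_upwards [eventually_ceil_two_div_add_one_le hb hΔ hspan hlog] with n hn
  rw [← mul_assoc]
  exact mul_le_mul_of_nonneg_right hn (by positivity)

end Bandwidth

section Estimator

variable {n : ℕ} {x : ℕ → ℝ} {h : ℝ → ℝ} {b δ : ℝ}

lemma iSup_max_sub_le_of_hits {v e : ℕ → ℝ} {𝒯 : Finset (Finset (Fin n))}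
    (hmodel : ∀ i, 1 ≤ i → i ≤ n → v i = h (x i) + e i)
    (hx : ∀ i, i ≤ n + 1 → x i ∈ Set.Icc (0 : ℝ) 1)
    (hmod : ∀ s ∈ Set.Icc (0 : ℝ) 1, ∀ t ∈ Set.Icc (0 : ℝ) 1, |s - t| ≤ b → |h s - h t| ≤ δ / 2)
    (hcover : ∀ t ∈ Set.Icc (0 : ℝ) 1, ∃ T ∈ 𝒯, ∀ i ∈ T, |x (i + 1) - t| ≤ b)
    (hδ : 0 ≤ δ) (hneg : ∀ i, 1 ≤ i → i ≤ n → e i ≤ 0)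
    (hhit : ∀ T ∈ 𝒯, ∃ i ∈ T, -(δ / 2) < e (i + 1)) :
    ⨆ t : Set.Icc (0 : ℝ) 1,
      max ((⨆ i : {i : ℕ // 1 ≤ i ∧ i ≤ n ∧ |x i - (t : ℝ)| ≤ b}, ((v i : ℝ) : EReal)) -
          ((h t : ℝ) : EReal))
        (((h t : ℝ) : EReal) -
          ⨆ i : {i : ℕ // 1 ≤ i ∧ i ≤ n ∧ |x i - (t : ℝ)| ≤ b}, ((v i : ℝ) : EReal)) ≤
      (δ : EReal) := by
  refine iSup_le fun ⟨t, ht⟩ => EReal.max_sub_sub_le_of_forall_le_of_exists_le ?_ ?_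
  · rintro ⟨i, hi1, hin, hit⟩
    show v i ≤ h t + δ
    have := (abs_le.mp (hmod _ (hx i (by omega)) t ht hit)).2
    linarith [hmodel i hi1 hin, hneg i hi1 hin]
  · obtain ⟨T, hT, hwin⟩ := hcover t ht
    obtain ⟨i, hiT, hi⟩ := hhit T hT
    have hit := hwin i hiT
    refine ⟨⟨i + 1, by omega, i.isLt, hit⟩, ?_⟩
    have := (abs_le.mp (hmod _ (hx (i + 1) (by omega)) t ht hit)).1
    linarith [hmodel (i + 1) (by omega) i.isLt]

theorem measure_iSup_max_sub_gt_le {Ω : Type*} [MeasurableSpace Ω] {μ : Measure Ω}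
    {v ε : ℕ → Ω → ℝ} {D : ℝ} {p : ℝ≥0∞}
    (hx0 : x 0 = 0) (hx1 : x (n + 1) = 1) (hxmono : ∀ i ≤ n, x i < x (i + 1))
    (hgap : ∀ i ≤ n, x (i + 1) - x i ≤ D) (hD : 0 < D) (hb : 0 < b) (hb1 : b ≤ 1)
    (hmodel : ∀ i, 1 ≤ i → i ≤ n → ∀ ω, v i ω = h (x i) + ε i ω)
    (hindep : iIndepFun (fun i : Fin n => ε (i + 1)) μ)
    (hneg : ∀ i, 1 ≤ i → i ≤ n → μ {ω | 0 < ε i ω} = 0)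
    (hp : ∀ i, 1 ≤ i → i ≤ n → μ {ω | ε i ω ≤ -(δ / 2)} ≤ p)
    (hmod : ∀ s ∈ Set.Icc (0 : ℝ) 1, ∀ t ∈ Set.Icc (0 : ℝ) 1, |s - t| ≤ b → |h s - h t| ≤ δ / 2)
    (hδ : 0 ≤ δ) :
    μ {ω | (δ : EReal) < ⨆ t : Set.Icc (0 : ℝ) 1,
      max ((⨆ i : {i : ℕ // 1 ≤ i ∧ i ≤ n ∧ |x i - (t : ℝ)| ≤ b}, ((v i ω : ℝ) : EReal)) -
          ((h t : ℝ) : EReal))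
        (((h t : ℝ) : EReal) -
          ⨆ i : {i : ℕ // 1 ≤ i ∧ i ≤ n ∧ |x i - (t : ℝ)| ≤ b}, ((v i ω : ℝ) : EReal))} ≤
      (⌈2 / b⌉₊ + 1) * p ^ ⌊b / (4 * D)⌋₊ := by
  obtain ⟨𝒯, h𝒯, hcard, hcover⟩ := exists_covering_blocks hx0 hx1 hgap hD hb hb1
  set Pos := ⋃ i ∈ Finset.Icc 1 n, {ω | 0 < ε i ω}
  set Miss := ⋃ T ∈ 𝒯, ⋂ i ∈ T, (fun ω => ε (i + 1) ω) ⁻¹' Set.Iic (-(δ / 2))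
  refine (measure_mono (t := Pos ∪ Miss) fun ω hω => ?_).trans ?_
  · by_contra hout
    simp only [Pos, Miss, Set.mem_union, Set.mem_iUnion, Set.mem_iInter, Set.mem_ofPred_eq,
      Set.mem_preimage, Set.mem_Iic, Finset.mem_Icc, exists_prop, not_or, not_exists, not_and,
      not_forall, not_lt, not_le] at hout
    exact hω.not_ge (iSup_max_sub_le_of_hits (hmodel · · · ω)
      (fun i hi => mem_Icc_of_le_succ hx0 hx1 hxmono hi) hmod hcover
      hδ (fun i hi1 hin => hout.1 i ⟨hi1, hin⟩) hout.2)
  have hPos : μ Pos = 0 := (measure_biUnion_null_iff (Finset.Icc 1 n).countable_toSet).mpr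
    fun i hi => hneg i (Finset.mem_Icc.mp hi).1 (Finset.mem_Icc.mp hi).2
  have hMiss : μ Miss ≤ 𝒯.card * p ^ ⌊b / (4 * D)⌋₊ :=
    hindep.measure_biUnion_biInter_preimage_le measurableSet_Iic
      (fun i => hp (i + 1) (by omega) i.isLt) hcard
  calc μ (Pos ∪ Miss) ≤ μ Pos + μ Miss := measure_union_le _ _
    _ ≤ (⌈2 / b⌉₊ + 1) * p ^ ⌊b / (4 * D)⌋₊ := by
      rw [hPos, zero_add]
      refine hMiss.trans (mul_le_mul_left ?_ _)
      exact_mod_cast h𝒯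

end Estimator

theorem boundary_estimator_uniform_consistency_fixed_design_general
    {Ω : Type} [MeasureSpace Ω] [IsProbabilityMeasure (ℙ : Measure Ω)]
    (Y ε : ℕ → ℕ → Ω → ℝ) (x : ℕ → ℕ → ℝ) (Λ₀ h₀ F₀ : ℝ → ℝ) (b : ℕ → ℝ) (Δ : ℕ → ℝ)
    -- (A2'): deterministic design points 0 = x_{0,n} < x_{1,n} < … < x_{n,n} < x_{n+1,n} = 1
    (hx0 : ∀ n, x n 0 = 0) (hx1 : ∀ n, x n (n + 1) = 1)
    (hxmono : ∀ n, ∀ i ≤ n, x n i < x n (i + 1))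
    -- Δ̄_n is the maximal spacing
    (hΔ : ∀ n, IsGreatest {d : ℝ | ∃ i ≤ n, d = x n (i + 1) - x n i} (Δ n))
    -- (A1'): model with independent errors with common cdf F₀, F₀(0) = 1,
    -- F₀(−Δ) < 1 for every Δ > 0
    (hmodel : ∀ n, ∀ i, 1 ≤ i → i ≤ n → ∀ ω, Λ₀ (Y n i ω) = h₀ (x n i) + ε n i ω)
    (hεmeas : ∀ n i, Measurable (ε n i))
    (hεindep : ∀ n, iIndepFun (fun i : Fin n => ε n ((i : ℕ) + 1)) ℙ)
    (hεcdf : ∀ n, ∀ i, 1 ≤ i → i ≤ n → ∀ t : ℝ, (ℙ {ω | ε n i ω ≤ t}).toReal = F₀ t)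
    (hF₀zero : F₀ 0 = 1)
    (hF₀lt : ∀ d : ℝ, 0 < d → F₀ (-d) < 1)
    -- (A3): h₀ continuous on [0,1]
    (hh₀ : ContinuousOn h₀ (Set.Icc 0 1))
    -- (A4'): b_n > 0, b_n → 0 and Δ̄_n (log n)/b_n → 0
    (hbpos : ∀ n, 0 < b n) (hb0 : Tendsto b atTop (𝓝 0))
    (hblog : Tendsto (fun n : ℕ => Δ n * Real.log n / b n) atTop (𝓝 0)) :
    ∀ δ : ℝ, 0 < δ →
      Tendsto
        (fun n : ℕ => ℙ {ω : Ω |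
          (δ : EReal) < ⨆ t : Set.Icc (0 : ℝ) 1,
            max
              ((⨆ i : {i : ℕ // 1 ≤ i ∧ i ≤ n ∧ |x n i - (t : ℝ)| ≤ b n},
                  ((Λ₀ (Y n (i : ℕ) ω) : ℝ) : EReal)) - ((h₀ t : ℝ) : EReal))
              (((h₀ t : ℝ) : EReal) -
                ⨆ i : {i : ℕ // 1 ≤ i ∧ i ≤ n ∧ |x n i - (t : ℝ)| ≤ b n},
                  ((Λ₀ (Y n (i : ℕ) ω) : ℝ) : EReal))})
        atTop (𝓝 0) := by
  intro δ hδ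
  obtain ⟨η, hη, hmod⟩ := Metric.uniformContinuousOn_iff_le.mp
    (isCompact_Icc.uniformContinuousOn_of_continuous hh₀) (δ / 2) (half_pos hδ)
  have hgap : ∀ n, ∀ i ≤ n, x n (i + 1) - x n i ≤ Δ n := fun n i hi => (hΔ n).2 ⟨i, hi, rfl⟩
  have hΔpos : ∀ n, 0 < Δ n := fun n => by
    obtain ⟨i, hi, hd⟩ := (hΔ n).1
    linarith [hxmono n i hi]
  -- taking the max with `1 / 2` keeps `ρ` positive, so that `log ρ` is meaningful
  set ρ := max (F₀ (-(δ / 2))) (1 / 2)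
  have hρ0 : 0 < ρ := lt_max_of_lt_right one_half_pos
  have hρ1 : ρ < 1 := max_lt (hF₀lt _ (half_pos hδ)) one_half_lt_one
  have hlim := ENNReal.tendsto_ofReal (tendsto_ceil_add_one_mul_pow_floor hbpos hΔpos
    (fun n => one_le_succ_mul_of_gap_le (hx0 n) (hx1 n) (hgap n)) hblog hρ0 hρ1)
  rw [ENNReal.ofReal_zero] at hlim
  refine tendsto_of_tendsto_of_tendsto_of_le_of_le' tendsto_const_nhds hlim
    (Eventually.of_forall fun _ => zero_le) ?_
  filter_upwards [hb0.eventually_lt_const (lt_min hη one_pos)] with n hbn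
  have hneg : ∀ i, 1 ≤ i → i ≤ n → ℙ {ω | 0 < ε n i ω} = 0 := fun i hi1 hin =>
    measure_lt_eq_zero_of_toReal_measure_le_eq_one (hεmeas n i) (by rw [hεcdf n i hi1 hin, hF₀zero])
  have hp : ∀ i, 1 ≤ i → i ≤ n → ℙ {ω | ε n i ω ≤ -(δ / 2)} ≤ ENNReal.ofReal ρ :=
    fun i hi1 hin => (ENNReal.le_ofReal_iff_toReal_le (measure_ne_top _ _) hρ0.le).mpr
      (by rw [hεcdf n i hi1 hin]; exact le_max_left _ _)
  have hmodn : ∀ s ∈ Set.Icc (0 : ℝ) 1, ∀ t ∈ Set.Icc (0 : ℝ) 1, |s - t| ≤ b n →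
      |h₀ s - h₀ t| ≤ δ / 2 := fun s hs t ht hst => by
    simpa only [Real.dist_eq] using
      hmod s hs t ht (by rw [Real.dist_eq]; linarith [min_le_left η 1])
  refine (measure_iSup_max_sub_gt_le (hx0 n) (hx1 n) (hxmono n) (hgap n) (hΔpos n) (hbpos n)
    (by linarith [min_le_right η 1]) (hmodel n) (hεindep n) hneg hp hmodn hδ.le).trans_eq ?_
  rw [ENNReal.ofReal_mul (by positivity), ENNReal.ofReal_pow hρ0.le]
  norm_cast

/-- **Uniform consistency of the local constant boundary estimator (fixed design).**
Under assumptions (A1'), (A2'), (A3) and (A4'), the estimator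
`h̃₀(x) = max{Λ₀(Y_{i,n}) : 1 ≤ i ≤ n, |x_{i,n} − x| ≤ b_n}` (computed in the extended
reals, so that `max ∅ = ⊥`) satisfies `sup_{x ∈ [0,1]} |h̃₀(x) − h₀(x)| = o_P(1)`
as `n → ∞`.  (Here `|A − B|` is expressed in `EReal` as `max (A − B) (B − A)`.) -/
theorem boundary_estimator_uniform_consistency_fixed_design
    {Ω : Type} [MeasureSpace Ω] [IsProbabilityMeasure (ℙ : Measure Ω)]
    (Y ε : ℕ → ℕ → Ω → ℝ) (x : ℕ → ℕ → ℝ) (Λ₀ h₀ F₀ : ℝ → ℝ) (b : ℕ → ℝ) (Δ : ℕ → ℝ)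
    -- Λ₀ is strictly increasing and continuous
    (hΛ₀mono : StrictMono Λ₀) (hΛ₀cont : Continuous Λ₀)
    -- (A2'): deterministic design points 0 = x_{0,n} < x_{1,n} < … < x_{n,n} < x_{n+1,n} = 1
    (hx0 : ∀ n, x n 0 = 0) (hx1 : ∀ n, x n (n + 1) = 1)
    (hxmono : ∀ n, ∀ i ≤ n, x n i < x n (i + 1))
    -- Δ̄_n is the maximal spacing
    (hΔ : ∀ n, IsGreatest {d : ℝ | ∃ i ≤ n, d = x n (i + 1) - x n i} (Δ n))
    -- (A1'): model with independent errors with common cdf F₀, F₀(0) = 1,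
    -- F₀(−Δ) < 1 for every Δ > 0
    (hmodel : ∀ n, ∀ i, 1 ≤ i → i ≤ n → ∀ ω, Λ₀ (Y n i ω) = h₀ (x n i) + ε n i ω)
    (hεmeas : ∀ n i, Measurable (ε n i))
    (hεindep : ∀ n, iIndepFun (fun i : Fin n => ε n ((i : ℕ) + 1)) ℙ)
    (hεcdf : ∀ n, ∀ i, 1 ≤ i → i ≤ n → ∀ t : ℝ, (ℙ {ω | ε n i ω ≤ t}).toReal = F₀ t)
    (hF₀zero : F₀ 0 = 1)
    (hF₀lt : ∀ d : ℝ, 0 < d → F₀ (-d) < 1)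
    -- (A3): h₀ continuous on [0,1]
    (hh₀ : ContinuousOn h₀ (Set.Icc 0 1))
    -- (A4'): b_n > 0, b_n → 0 and Δ̄_n (log n)/b_n → 0
    (hbpos : ∀ n, 0 < b n) (hb0 : Tendsto b atTop (𝓝 0))
    (hblog : Tendsto (fun n : ℕ => Δ n * Real.log n / b n) atTop (𝓝 0)) :
    ∀ δ : ℝ, 0 < δ →
      Tendsto
        (fun n : ℕ => ℙ {ω : Ω |
          (δ : EReal) < ⨆ t : Set.Icc (0 : ℝ) 1,
            max
              ((⨆ i : {i : ℕ // 1 ≤ i ∧ i ≤ n ∧ |x n i - (t : ℝ)| ≤ b n},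
                  ((Λ₀ (Y n (i : ℕ) ω) : ℝ) : EReal)) - ((h₀ t : ℝ) : EReal))
              (((h₀ t : ℝ) : EReal) -
                ⨆ i : {i : ℕ // 1 ≤ i ∧ i ≤ n ∧ |x n i - (t : ℝ)| ≤ b n},
                  ((Λ₀ (Y n (i : ℕ) ω) : ℝ) : EReal))})
        atTop (𝓝 0) :=
  boundary_estimator_uniform_consistency_fixed_design_general Y ε x Λ₀ h₀ F₀ b Δ hx0 hx1 hxmono hΔ
    hmodel hεmeas hεindep hεcdf hF₀zero hF₀lt hh₀ hbpos hb0 hblog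
end

section
/- Uniform smallness of the nearest error (fixed design): under assumptions (A1'), (A2') and (A4'), sup_{x∈[0,1]} min{|ε_{i,n}| : 1 ≤ i ≤ n, |x_{i,n} − x| ≤ b_n} = o_P(1), where the minimum over an empty index set is interpreted as +∞; i.e. for every δ > 0, P(sup_{x∈[0,1]} min_{i : |x_{i,n}−x| ≤ b_n} |ε_{i,n}| > δ) → 0 as n → ∞. -/
/-!
Since `F₀ 0 = 1`, every error is almost surely nonpositive, so `P(|ε_i| > δ) ≤ F₀(-δ) =: q < 1`.
If the supremum exceeds `δ` at some `t`, a design point `x_j` lies within `Δ̄_n ≤ b_n / 2` of `t`,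
and then every error in the window `|x_i - x_j| ≤ b_n / 2` exceeds `δ` in absolute value.
Because `Δ̄_n log n = o(b_n)`, each such window holds at least `M_n = m ⌈log n⌉` design points, so
independence and a union bound over `j` bound the probability by `n q ^ M_n`, which is at most
`1 / n` once `q ^ m < e⁻²`.
-/

open MeasureTheory ProbabilityTheory Filter Topology
open scoped ENNReal
open scoped Finset

section FixedDesign

variable {n : ℕ} {x : ℕ → ℝ} {D : ℝ}

theorem mem_Icc_of_design (hx0 : x 0 = 0) (hx1 : x (n + 1) = 1)
    (hmono : ∀ i ≤ n, x i < x (i + 1)) {j : ℕ} (hj : j ≤ n + 1) : x j ∈ Set.Icc 0 1 := by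
  have hx : MonotoneOn x (Set.Iic (n + 1)) :=
    (strictMonoOn_Iic_of_lt_succ fun i hi => hmono i (Nat.lt_succ_iff.1 hi)).monotoneOn
  exact ⟨hx0 ▸ hx (Nat.zero_le _) hj (Nat.zero_le j), hx1 ▸ hx hj Set.self_mem_Iic hj⟩

theorem exists_design_point_mem_Ioc (hx0 : x 0 = 0) (hx1 : x (n + 1) = 1)
    (hgap : ∀ i ≤ n, x (i + 1) - x i ≤ D) (hD : 0 ≤ D) {u : ℝ} (hu : 0 ≤ u)
    (huD : u + D < 1) : ∃ i ∈ Finset.Icc 1 n, u < x i ∧ x i ≤ u + D := by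
  classical
  have hex : ∃ i, u < x i := ⟨n + 1, by linarith⟩
  set i := Nat.find hex
  have hi : u < x i := Nat.find_spec hex
  have hi0 : i ≠ 0 := fun h => by rw [h, hx0] at hi; linarith
  have hprev : x (i - 1) ≤ u := not_lt.1 (Nat.find_min hex (by omega))
  have hle : i ≤ n + 1 := Nat.find_min' hex (by linarith)
  have hxi : x i ≤ u + D := by
    have := hgap (i - 1) (by omega)
    rw [Nat.sub_add_cancel (Nat.one_le_iff_ne_zero.2 hi0)] at this
    linarith
  have hin : i ≠ n + 1 := fun h => by rw [h, hx1] at hxi; linarith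
  exact ⟨i, Finset.mem_Icc.2 ⟨by omega, by omega⟩, hi, hxi⟩

theorem le_card_filter_design_mem_Ioc (hx0 : x 0 = 0) (hx1 : x (n + 1) = 1)
    (hgap : ∀ i ≤ n, x (i + 1) - x i ≤ D) (hD : 0 ≤ D) {u : ℝ} (hu : 0 ≤ u) :
    ∀ m : ℕ, u + m * D < 1 → m ≤ #{i ∈ Finset.Icc 1 n | u < x i ∧ x i ≤ u + m * D}
  | 0, _ => Nat.zero_le _
  | m + 1, h => by
    push_cast at h
    have hmD : 0 ≤ (m : ℝ) * D := mul_nonneg m.cast_nonneg hD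
    obtain ⟨j, hj, hjlo, hjhi⟩ :=
      exists_design_point_mem_Ioc hx0 hx1 hgap hD (by linarith : 0 ≤ u + m * D) (by linarith)
    have hsub : {i ∈ Finset.Icc 1 n | u < x i ∧ x i ≤ u + m * D} ⊆
        {i ∈ Finset.Icc 1 n | u < x i ∧ x i ≤ u + (m + 1 : ℕ) * D} :=
      Finset.monotone_filter_right _ fun i _ hi => ⟨hi.1, by push_cast; linarith [hi.2]⟩
    have hssub := (Finset.ssubset_iff_of_subset hsub).2 ⟨j, by
      simp only [Finset.mem_filter]; push_cast
      exact ⟨hj, by linarith, by linarith⟩, by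
      simp only [Finset.mem_filter, not_and, not_le]; exact fun _ _ => hjlo⟩
    exact (le_card_filter_design_mem_Ioc hx0 hx1 hgap hD hu m (by linarith)).trans_lt
      (Finset.card_lt_card hssub)

theorem le_card_filter_abs_sub_le (hx0 : x 0 = 0) (hx1 : x (n + 1) = 1)
    (hgap : ∀ i ≤ n, x (i + 1) - x i ≤ D) (hD : 0 ≤ D) {c ρ : ℝ} (hc : c ∈ Set.Icc 0 1)
    (hρ : 2 * ρ ≤ 1) {m : ℕ} (hm : m * D < ρ) :
    m ≤ #{i ∈ Finset.Icc 1 n | |x i - c| ≤ ρ} := by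
  have hmD : 0 ≤ (m : ℝ) * D := mul_nonneg m.cast_nonneg hD
  obtain ⟨u, hu, hu1, hcu, hwin⟩ :
      ∃ u, 0 ≤ u ∧ u + m * D < 1 ∧ c - ρ ≤ u ∧ u + m * D ≤ c + ρ := by
    by_cases h : c + ρ < 1
    · exact ⟨c, hc.1, by linarith, by linarith, by linarith⟩
    · exact ⟨c - ρ, by linarith, by linarith [hc.2], le_rfl, by linarith⟩
  refine (le_card_filter_design_mem_Ioc hx0 hx1 hgap hD hu m hu1).trans
    (Finset.card_le_card (Finset.monotone_filter_right _ fun i _ hi => ?_))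
  rw [abs_le]
  constructor <;> linarith [hi.1, hi.2]

theorem exists_design_point_near (hx0 : x 0 = 0) (hx1 : x (n + 1) = 1)
    (hmono : ∀ i ≤ n, x i < x (i + 1)) (hgap : ∀ i ≤ n, x (i + 1) - x i ≤ D) (hD : 0 ≤ D)
    (hn : 1 ≤ n) {t : ℝ} (ht : t ∈ Set.Icc 0 1) : ∃ j ∈ Finset.Icc 1 n, |x j - t| ≤ D := by
  by_cases h : t + D < 1
  · obtain ⟨j, hj, hlo, hhi⟩ := exists_design_point_mem_Ioc hx0 hx1 hgap hD ht.1 h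
    exact ⟨j, hj, abs_le.2 ⟨by linarith, by linarith⟩⟩
  · have hxn := (mem_Icc_of_design hx0 hx1 hmono (Nat.le_succ n)).2
    have := hgap n le_rfl
    exact ⟨n, Finset.mem_Icc.2 ⟨hn, le_rfl⟩, abs_le.2 ⟨by linarith [ht.2], by linarith [ht.2]⟩⟩

end FixedDesign

section Errors

variable {Ω : Type*} [MeasurableSpace Ω] {μ : Measure Ω}

theorem ae_le_of_measure_le_eq_one [IsProbabilityMeasure μ] {e : Ω → ℝ} (he : Measurable e)
    {t : ℝ} (h : μ {ω | e ω ≤ t} = 1) : ∀ᵐ ω ∂μ, e ω ≤ t :=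
  ae_iff.2 ((prob_compl_eq_zero_iff (measurableSet_le he measurable_const)).2 h)

theorem measure_lt_abs_le_of_ae_nonpos {e : Ω → ℝ} (he : ∀ᵐ ω ∂μ, e ω ≤ 0) (δ : ℝ) :
    μ {ω | δ < |e ω|} ≤ μ {ω | e ω ≤ -δ} :=
  measure_mono_ae <| he.mono fun ω hω (hlt : δ < |e ω|) =>
    show e ω ≤ -δ by rw [abs_of_nonpos hω] at hlt; linarith

theorem ProbabilityTheory.iIndepFun.measure_biInter_preimage_le_pow {ι β : Type*}
    [MeasurableSpace β] {f : ι → Ω → β} (hf : iIndepFun f μ) (S : Finset ι) {B : Set β} (hB : MeasurableSet B)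
    {r : ℝ≥0∞} (hr : ∀ i ∈ S, μ (f i ⁻¹' B) ≤ r) : μ (⋂ i ∈ S, f i ⁻¹' B) ≤ r ^ #S := by
  rw [hf.meas_biInter fun i _ => ⟨B, hB, rfl⟩]
  exact Finset.prod_le_pow_card _ _ _ hr

theorem measure_biInter_preimage_le_pow_of_iIndepFun_succ {β : Type*} [MeasurableSpace β]
    {n : ℕ} {f : ℕ → Ω → β} (hf : iIndepFun (fun k : Fin n => f (k + 1)) μ)
    {S : Finset ℕ} (hS : S ⊆ Finset.Icc 1 n) {B : Set β} (hB : MeasurableSet B)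
    {r : ℝ≥0∞} (hr : ∀ i ∈ S, μ (f i ⁻¹' B) ≤ r) : μ (⋂ i ∈ S, f i ⁻¹' B) ≤ r ^ #S := by
  classical
  set T : Finset (Fin n) := {k | (k : ℕ) + 1 ∈ S}
  have hTS : T.image (fun k : Fin n => (k : ℕ) + 1) = S := by
    ext i
    simp only [Finset.mem_image, Finset.mem_filter, Finset.mem_univ, true_and, T]
    refine ⟨fun ⟨k, hk, hki⟩ => hki ▸ hk, fun hi => ?_⟩
    have hi' := Finset.mem_Icc.1 (hS hi)
    exact ⟨⟨i - 1, by omega⟩, by simpa [Nat.sub_add_cancel hi'.1] using hi, by simp; omega⟩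
  have hinj : Function.Injective fun k : Fin n => (k : ℕ) + 1 :=
    fun a b hab => Fin.ext (Nat.add_right_cancel hab)
  rw [← hTS, Finset.set_biInter_finset_image, Finset.card_image_of_injective _ hinj]
  exact hf.measure_biInter_preimage_le_pow T hB fun k hk => hr _ (by simpa [T] using hk)

end Errors

section NearestError

variable {n : ℕ} {x : ℕ → ℝ} {D b : ℝ}

theorem exists_window_forall_lt_of_lt_iSup_iInf (hx0 : x 0 = 0) (hx1 : x (n + 1) = 1)
    (hmono : ∀ i ≤ n, x i < x (i + 1)) (hgap : ∀ i ≤ n, x (i + 1) - x i ≤ D) (hD : 0 ≤ D)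
    (hn : 1 ≤ n) (hDb : D ≤ b / 2) {a : ℕ → ℝ≥0∞} {c : ℝ≥0∞}
    (h : c < ⨆ t : Set.Icc (0 : ℝ) 1, ⨅ i : {i : ℕ // 1 ≤ i ∧ i ≤ n ∧ |x i - t| ≤ b}, a i) :
    ∃ j ∈ Finset.Icc 1 n, ∀ i ∈ Finset.Icc 1 n, |x i - x j| ≤ b / 2 → c < a i := by
  obtain ⟨t, ht⟩ := lt_iSup_iff.1 h
  obtain ⟨j, hj, hjt⟩ := exists_design_point_near hx0 hx1 hmono hgap hD hn t.2
  refine ⟨j, hj, fun i hi hij => ht.trans_le (iInf_le_of_le ⟨i, ?_⟩ le_rfl)⟩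
  obtain ⟨hi1, hin⟩ := Finset.mem_Icc.1 hi
  refine ⟨hi1, hin, ?_⟩
  calc |x i - t| ≤ |x i - x j| + |x j - t| := abs_sub_le _ _ _
    _ ≤ b := by linarith

theorem measure_lt_iSup_iInf_le {Ω : Type*} [MeasurableSpace Ω] {μ : Measure Ω}
    {ε : ℕ → Ω → ℝ} (hindep : iIndepFun (fun k : Fin n => ε (k + 1)) μ) {δ : ℝ} {r : ℝ≥0∞}
    (hr : r ≤ 1) (htail : ∀ i ∈ Finset.Icc 1 n, μ {ω | δ < |ε i ω|} ≤ r)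
    (hx0 : x 0 = 0) (hx1 : x (n + 1) = 1) (hmono : ∀ i ≤ n, x i < x (i + 1))
    (hgap : ∀ i ≤ n, x (i + 1) - x i ≤ D) (hn : 1 ≤ n) (hb : b ≤ 1) {M : ℕ}
    (hMD : (M + 1) * D ≤ b / 2) :
    μ {ω | ENNReal.ofReal δ < ⨆ t : Set.Icc (0 : ℝ) 1,
        ⨅ i : {i : ℕ // 1 ≤ i ∧ i ≤ n ∧ |x i - t| ≤ b}, ENNReal.ofReal |ε i ω|}
      ≤ n * r ^ M := by
  classical
  have hD : 0 < D := (sub_pos.2 (hmono 0 (Nat.zero_le n))).trans_le (hgap 0 (Nat.zero_le n))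
  have hMD' : (M : ℝ) * D < b / 2 := by linarith
  have hDb : D ≤ b / 2 := by nlinarith [M.cast_nonneg (α := ℝ)]
  let W : ℕ → Finset ℕ := fun j => {i ∈ Finset.Icc 1 n | |x i - x j| ≤ b / 2}
  have hbad : MeasurableSet {y : ℝ | δ < |y|} := measurableSet_lt measurable_const measurable_abs
  calc _ ≤ μ (⋃ j ∈ Finset.Icc 1 n, ⋂ i ∈ W j, ε i ⁻¹' {y | δ < |y|}) := by
        refine measure_mono fun ω hω => ?_
        obtain ⟨j, hj, hall⟩ :=
          exists_window_forall_lt_of_lt_iSup_iInf hx0 hx1 hmono hgap hD.le hn hDb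
            (a := fun i => ENNReal.ofReal |ε i ω|) hω
        simp only [Set.mem_iUnion, Set.mem_iInter, Set.mem_preimage]
        exact ⟨j, hj, fun i hi =>
          (ENNReal.ofReal_lt_ofReal_iff'.1 (hall i (Finset.mem_filter.1 hi).1
            (Finset.mem_filter.1 hi).2)).1⟩
    _ ≤ ∑ j ∈ Finset.Icc 1 n, μ (⋂ i ∈ W j, ε i ⁻¹' {y | δ < |y|}) :=
        measure_biUnion_finset_le _ _
    _ ≤ ∑ j ∈ Finset.Icc 1 n, r ^ M := by
        refine Finset.sum_le_sum fun j hj => ?_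
        have hxj := mem_Icc_of_design hx0 hx1 hmono (Nat.le_succ_of_le (Finset.mem_Icc.1 hj).2)
        refine (measure_biInter_preimage_le_pow_of_iIndepFun_succ hindep
          (Finset.filter_subset _ _) hbad fun i hi => htail i (Finset.mem_filter.1 hi).1).trans
          (pow_le_pow_right_of_le_one' hr ?_)
        exact le_card_filter_abs_sub_le hx0 hx1 hgap hD.le hxj (by linarith) hMD'
    _ = n * r ^ M := by simp

end NearestError

theorem eventually_mul_ceil_log_add_one_mul_lt {b Δ : ℕ → ℝ} (hb : ∀ n, 0 < b n)
    (hΔ : ∀ n, 0 ≤ Δ n) (h : Tendsto (fun n : ℕ => Δ n * Real.log n / b n) atTop (𝓝 0))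
    (m : ℕ) : ∀ᶠ n : ℕ in atTop, ((m * ⌈Real.log n⌉₊ : ℕ) + 1) * Δ n ≤ b n / 2 := by
  have hlog : Tendsto (fun n : ℕ => Real.log n) atTop atTop :=
    Real.tendsto_log_atTop.comp tendsto_natCast_atTop_atTop
  filter_upwards [hlog.eventually_ge_atTop 1,
    h.eventually_lt_const (by positivity : (0 : ℝ) < 1 / (2 * (2 * m + 1)))] with n hn hsmall
  rw [div_lt_iff₀ (hb n)] at hsmall
  have hceil : (⌈Real.log n⌉₊ : ℝ) ≤ 2 * Real.log n :=
    (Nat.ceil_lt_add_one (by linarith)).le.trans (by linarith)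
  have hcount : ((m * ⌈Real.log n⌉₊ : ℕ) : ℝ) + 1 ≤ (2 * m + 1) * Real.log n := by
    push_cast
    nlinarith [m.cast_nonneg (α := ℝ)]
  calc ((m * ⌈Real.log n⌉₊ : ℕ) + 1) * Δ n ≤ (2 * m + 1) * (Δ n * Real.log n) := by
        nlinarith [hΔ n]
    _ ≤ (2 * m + 1) * (1 / (2 * (2 * m + 1)) * b n) := by gcongr
    _ = b n / 2 := by field_simp

theorem exists_tendsto_natCast_mul_pow_mul_ceil_log {q : ℝ} (hq0 : 0 ≤ q) (hq1 : q < 1) :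
    ∃ m : ℕ, Tendsto (fun n : ℕ => (n : ℝ≥0∞) * ENNReal.ofReal q ^ (m * ⌈Real.log n⌉₊))
      atTop (𝓝 0) := by
  obtain ⟨m, hm⟩ := exists_pow_lt_of_lt_one (Real.exp_pos (-2)) hq1
  refine ⟨m, tendsto_of_tendsto_of_tendsto_of_le_of_le' tendsto_const_nhds
    ENNReal.tendsto_inv_nat_nhds_zero (.of_forall fun _ => zero_le) ?_⟩
  filter_upwards [eventually_ge_atTop 1] with n hn
  have hn0 : (0 : ℝ) < n := by exact_mod_cast hn
  have hpow : q ^ (m * ⌈Real.log n⌉₊) ≤ ((n : ℝ) ^ 2)⁻¹ :=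
    calc q ^ (m * ⌈Real.log n⌉₊) = (q ^ m) ^ ⌈Real.log n⌉₊ := pow_mul _ _ _
      _ ≤ Real.exp (-2) ^ ⌈Real.log n⌉₊ := by gcongr
      _ = Real.exp (-(2 * ⌈Real.log n⌉₊)) := by rw [← Real.exp_nat_mul]; ring_nf
      _ ≤ Real.exp (-(2 * Real.log n)) := by gcongr; exact Nat.le_ceil _
      _ = ((n : ℝ) ^ 2)⁻¹ := by
        rw [Real.exp_neg, mul_comm, Real.exp_mul, Real.exp_log hn0, Real.rpow_two]
  rw [← ENNReal.ofReal_natCast, ← ENNReal.ofReal_pow hq0, ← ENNReal.ofReal_mul hn0.le,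
    ← ENNReal.ofReal_inv_of_pos hn0]
  refine ENNReal.ofReal_le_ofReal ?_
  calc (n : ℝ) * q ^ (m * ⌈Real.log n⌉₊) ≤ n * ((n : ℝ) ^ 2)⁻¹ := by gcongr
    _ = (n : ℝ)⁻¹ := by field_simp

/-- **Uniform smallness of the nearest error (fixed design).**
Under assumptions (A1'), (A2') and (A4'),
`sup_{x ∈ [0,1]} min{|ε_{i,n}| : 1 ≤ i ≤ n, |x_{i,n} − x| ≤ b_n} = o_P(1)`, the minimum
over an empty index set being `+∞` (the infimum is taken in `ℝ≥0∞`, so `⨅` over an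
empty index type is `⊤`):  for every `δ > 0`,
`P(sup_{x ∈ [0,1]} min_{i : |x_{i,n} − x| ≤ b_n} |ε_{i,n}| > δ) → 0` as `n → ∞`. -/
theorem nearest_error_uniformly_small_fixed_design
    {Ω : Type} [MeasureSpace Ω] [IsProbabilityMeasure (ℙ : Measure Ω)]
    (ε : ℕ → ℕ → Ω → ℝ) (x : ℕ → ℕ → ℝ) (F₀ : ℝ → ℝ) (b : ℕ → ℝ) (Δ : ℕ → ℝ)
    -- (A2'): deterministic design points 0 = x_{0,n} < x_{1,n} < … < x_{n,n} < x_{n+1,n} = 1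
    (hx0 : ∀ n, x n 0 = 0) (hx1 : ∀ n, x n (n + 1) = 1)
    (hxmono : ∀ n, ∀ i ≤ n, x n i < x n (i + 1))
    -- Δ̄_n is the maximal spacing
    (hΔ : ∀ n, IsGreatest {d : ℝ | ∃ i ≤ n, d = x n (i + 1) - x n i} (Δ n))
    -- (A1'): independent errors with common cdf F₀, F₀(0) = 1, F₀(−Δ) < 1 for Δ > 0
    (hεmeas : ∀ n i, Measurable (ε n i))
    (hεindep : ∀ n, iIndepFun (fun i : Fin n => ε n ((i : ℕ) + 1)) ℙ)
    (hεcdf : ∀ n, ∀ i, 1 ≤ i → i ≤ n → ∀ t : ℝ, (ℙ {ω | ε n i ω ≤ t}).toReal = F₀ t)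
    (hF₀zero : F₀ 0 = 1)
    (hF₀lt : ∀ d : ℝ, 0 < d → F₀ (-d) < 1)
    -- (A4'): b_n > 0, b_n → 0 and Δ̄_n (log n)/b_n → 0
    (hbpos : ∀ n, 0 < b n) (hb0 : Tendsto b atTop (𝓝 0))
    (hblog : Tendsto (fun n : ℕ => Δ n * Real.log n / b n) atTop (𝓝 0)) :
    ∀ δ : ℝ, 0 < δ →
      Tendsto
        (fun n : ℕ => ℙ {ω : Ω |
          ENNReal.ofReal δ < ⨆ t : Set.Icc (0 : ℝ) 1,
            ⨅ i : {i : ℕ // 1 ≤ i ∧ i ≤ n ∧ |x n i - (t : ℝ)| ≤ b n},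
              ENNReal.ofReal |ε n (i : ℕ) ω|})
        atTop (𝓝 0) := by
  intro δ hδ
  have hcdf : ∀ n i, 1 ≤ i → i ≤ n → ∀ t, ℙ {ω | ε n i ω ≤ t} = ENNReal.ofReal (F₀ t) :=
    fun n i h1 h2 t => by rw [← hεcdf n i h1 h2 t, ENNReal.ofReal_toReal (measure_ne_top _ _)]
  have htail : ∀ n, ∀ i ∈ Finset.Icc 1 n,
      ℙ {ω | δ < |ε n i ω|} ≤ ENNReal.ofReal (F₀ (-δ)) := fun n i hi => by
    obtain ⟨hi1, hin⟩ := Finset.mem_Icc.1 hi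
    rw [← hcdf n i hi1 hin]
    refine measure_lt_abs_le_of_ae_nonpos (ae_le_of_measure_le_eq_one (hεmeas n i) ?_) δ
    rw [hcdf n i hi1 hin, hF₀zero, ENNReal.ofReal_one]
  have hq0 : 0 ≤ F₀ (-δ) := hεcdf 1 1 le_rfl le_rfl (-δ) ▸ ENNReal.toReal_nonneg
  have hgap : ∀ n, ∀ i ≤ n, x n (i + 1) - x n i ≤ Δ n := fun n i hi => (hΔ n).2 ⟨i, hi, rfl⟩
  have hΔ0 : ∀ n, 0 ≤ Δ n := fun n =>
    (sub_pos.2 (hxmono n 0 (Nat.zero_le n))).le.trans (hgap n 0 (Nat.zero_le n))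
  obtain ⟨m, hm⟩ := exists_tendsto_natCast_mul_pow_mul_ceil_log hq0 (hF₀lt δ hδ)
  refine tendsto_of_tendsto_of_tendsto_of_le_of_le' tendsto_const_nhds hm
    (.of_forall fun _ => zero_le) ?_
  filter_upwards [eventually_ge_atTop 1, hb0.eventually_le_const zero_lt_one,
    eventually_mul_ceil_log_add_one_mul_lt hbpos hΔ0 hblog m] with n hn hb1 hwindow
  exact measure_lt_iSup_iInf_le (hεindep n) (ENNReal.ofReal_le_one.2 (hF₀lt δ hδ).le)
    (htail n) (hx0 n) (hx1 n) (hxmono n) (hgap n) hn hb1 hwindow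
end

section
/- Riemann-sum approximation under the design regularity condition: under assumption (A2''), for every bounded Riemann-integrable function φ : [0,1] → ℝ one has (1/n) Σ_{i=1}^n φ(x_{i,n}) → ∫₀¹ φ(x) f_X(x) dx as n → ∞. -/
/-!
Let `ψₙ` be the step function equal to `φ(x_{i,n})` on `(x_{i-1,n}, x_{i,n}]`. Since
`f_X ≥ c > 0`, (A2'') forces the mesh of the design to be `O(1/n)`, so `ψₙ → φ` at every
continuity point of `φ`, and dominated convergence gives
`Σᵢ φ(x_{i,n}) ∫_{x_{i-1,n}}^{x_{i,n}} f_X = ∫ ψₙ f_X → ∫ φ f_X`. By (A2'') again every weight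
`∫_{x_{i-1,n}}^{x_{i,n}} f_X` is `(1 + o(1))/n`, so this sum differs from `(1/n) Σᵢ φ(x_{i,n})`
by `o(1)`.
-/

open MeasureTheory Filter Topology Set Finset

theorem monotone_min_of_le_succ {α : Type*} [Preorder α] {y : ℕ → α} {N : ℕ}
    (hy : ∀ i < N, y i ≤ y (i + 1)) : Monotone fun i => y (min i N) :=
  monotone_nat_of_le_succ fun i => by
    rcases lt_or_ge i N with hi | hi
    · rw [min_eq_left hi.le, min_eq_left hi]
      exact hy i hi
    · rw [min_eq_right hi, min_eq_right (hi.trans i.le_succ)]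

noncomputable def stepFunction (y v : ℕ → ℝ) (N : ℕ) (t : ℝ) : ℝ :=
  ∑ i ∈ range N, (Ioc (y i) (y (i + 1))).indicator (fun _ => v i) t

namespace stepFunction

variable {y : ℕ → ℝ} (v : ℕ → ℝ) {N i : ℕ} {t : ℝ}

theorem eq_of_mem_Ioc (hy : Monotone y) (hi : i < N) (ht : t ∈ Ioc (y i) (y (i + 1))) :
    stepFunction y v N t = v i := by
  rw [stepFunction, Finset.sum_eq_single_of_mem i (mem_range.2 hi), indicator_of_mem ht]
  intro j _ hji
  refine indicator_of_notMem (fun htj => ?_) _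
  have := hy.pairwise_disjoint_on_Ioc_succ hji
  simp only [Function.onFun, Order.succ_eq_add_one] at this
  exact Set.disjoint_left.1 this htj ht

theorem eq_zero_of_notMem_Ioc (hy : Monotone y) (ht : t ∉ Ioc (y 0) (y N)) :
    stepFunction y v N t = 0 := by
  refine Finset.sum_eq_zero fun i hi => indicator_of_notMem (fun hti => ht ?_) _
  exact Ioc_subset_Ioc (hy i.zero_le) (hy (mem_range.1 hi)) hti

theorem exists_eq_of_mem_Ioc (hy : Monotone y) (ht : t ∈ Ioc (y 0) (y N)) :
    ∃ i < N, t ∈ Ioc (y i) (y (i + 1)) ∧ stepFunction y v N t = v i := by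
  rw [← hy.biUnion_Ico_Ioc_map_succ] at ht
  simp only [Order.succ_eq_add_one, Set.mem_iUnion, Set.mem_Ico, exists_prop] at ht
  obtain ⟨i, ⟨-, hi⟩, hti⟩ := ht
  exact ⟨i, hi, hti, eq_of_mem_Ioc v hy hi hti⟩

theorem abs_le (hy : Monotone y) {M : ℝ} (hM : 0 ≤ M) (hv : ∀ i < N, |v i| ≤ M) (t : ℝ) :
    |stepFunction y v N t| ≤ M := by
  by_cases ht : t ∈ Ioc (y 0) (y N)
  · obtain ⟨i, hi, -, heq⟩ := exists_eq_of_mem_Ioc v hy ht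
    exact heq ▸ hv i hi
  · simpa [eq_zero_of_notMem_Ioc v hy ht] using hM

theorem measurable : Measurable (stepFunction y v N) :=
  Finset.measurable_sum _ fun _ _ => measurable_const.indicator measurableSet_Ioc

theorem setIntegral_mul {g : ℝ → ℝ} {s : Set ℝ} (hy : Monotone y)
    (hs : Ioc (y 0) (y N) ⊆ s) (hg : IntegrableOn g s) :
    ∫ t in s, stepFunction y v N t * g t =
      ∑ i ∈ range N, v i * ∫ t in Ioc (y i) (y (i + 1)), g t := by
  have hcell : ∀ i ∈ range N, Ioc (y i) (y (i + 1)) ⊆ s := fun i hi =>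
    (Ioc_subset_Ioc (hy i.zero_le) (hy (mem_range.1 hi))).trans hs
  have hmul : ∀ t, stepFunction y v N t * g t =
      ∑ i ∈ range N, (Ioc (y i) (y (i + 1))).indicator (fun u => v i * g u) t := fun t => by
    simp only [stepFunction, Finset.sum_mul, Set.indicator_mul_left]
  simp_rw [hmul]
  rw [integral_finsetSum _ fun i _ => (hg.const_mul (v i)).indicator measurableSet_Ioc]
  refine Finset.sum_congr rfl fun i hi => ?_
  rw [setIntegral_indicator measurableSet_Ioc, inter_eq_self_of_subset_right (hcell i hi),
    integral_const_mul]

end stepFunction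

section Partitions

variable {a b : ℝ} {y : ℕ → ℕ → ℝ} {N : ℕ → ℕ}

theorem eventually_sub_le_of_integral_Ioc_le {g : ℝ → ℝ} {c K : ℝ}
    (hy : ∀ n, Monotone (y n)) (hy0 : ∀ n, y n 0 = a) (hyN : ∀ n, y n (N n) = b)
    (hc : 0 < c) (hgc : ∀ t ∈ Icc a b, c ≤ g t) (hg : IntegrableOn g (Icc a b))
    (hmass : ∀ᶠ n in atTop, ∀ i < N n, ∫ t in Ioc (y n i) (y n (i + 1)), g t ≤ K / n) :
    ∀ ε > 0, ∀ᶠ n in atTop, ∀ i < N n, y n (i + 1) - y n i ≤ ε := by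
  intro ε hε
  have hK : ∀ᶠ n : ℕ in atTop, K / n ≤ c * ε :=
    (tendsto_const_div_atTop_nhds_zero_nat K).eventually (ge_mem_nhds (by positivity))
  filter_upwards [hmass, hK] with n hn hnK i hi
  have hcell : Ioc (y n i) (y n (i + 1)) ⊆ Icc a b := by
    rw [← hy0 n, ← hyN n]
    exact Ioc_subset_Icc_self.trans (Icc_subset_Icc (hy n i.zero_le) (hy n hi))
  have hlow := setIntegral_ge_of_const_le_real measurableSet_Ioc measure_Ioc_lt_top.ne
    (fun t ht => hgc t (hcell ht)) (hg.mono_set hcell)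
  rw [Real.volume_real_Ioc_of_le (hy n i.le_succ)] at hlow
  exact le_of_mul_le_mul_left (hlow.trans ((hn i hi).trans hnK)) hc

theorem tendsto_stepFunction_of_continuousWithinAt {φ : ℝ → ℝ} {t : ℝ}
    (hy : ∀ n, Monotone (y n)) (hy0 : ∀ n, y n 0 = a) (hyN : ∀ n, y n (N n) = b)
    (hmesh : ∀ ε > 0, ∀ᶠ n in atTop, ∀ i < N n, y n (i + 1) - y n i ≤ ε)
    (ht : t ∈ Ioc a b) (hφ : ContinuousWithinAt φ (Icc a b) t) :
    Tendsto (fun n => stepFunction (y n) (fun i => φ (y n (i + 1))) (N n) t) atTop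
      (𝓝 (φ t)) := by
  refine Metric.tendsto_nhds.2 fun ε hε => ?_
  obtain ⟨δ, hδ, hφδ⟩ := Metric.continuousWithinAt_iff.1 hφ ε hε
  filter_upwards [hmesh (δ / 2) (half_pos hδ)] with n hn
  obtain ⟨i, hi, hti, heq⟩ :=
    stepFunction.exists_eq_of_mem_Ioc (N := N n) (fun i => φ (y n (i + 1))) (hy n)
      (by rwa [hy0, hyN])
  rw [heq]
  refine hφδ (hy0 n ▸ hyN n ▸ ⟨hy n i.succ.zero_le, hy n hi⟩) ?_
  rw [Real.dist_eq, abs_of_nonneg (sub_nonneg.2 hti.2)]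
  linarith [hn i hi, hti.1]

theorem tendsto_sum_mul_setIntegral_Ioc {φ g : ℝ → ℝ} {M : ℝ}
    (hy : ∀ n, Monotone (y n)) (hy0 : ∀ n, y n 0 = a) (hyN : ∀ n, y n (N n) = b)
    (hmesh : ∀ ε > 0, ∀ᶠ n in atTop, ∀ i < N n, y n (i + 1) - y n i ≤ ε)
    (hφM : ∀ t ∈ Icc a b, |φ t| ≤ M)
    (hφc : ∀ᵐ t ∂volume.restrict (Icc a b), ContinuousWithinAt φ (Icc a b) t)
    (hg : IntegrableOn g (Icc a b)) :
    Tendsto (fun n =>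
        ∑ i ∈ range (N n), φ (y n (i + 1)) * ∫ t in Ioc (y n i) (y n (i + 1)), g t)
      atTop (𝓝 (∫ t in Icc a b, φ t * g t)) := by
  have hsub : ∀ n, Ioc (y n 0) (y n (N n)) ⊆ Icc a b := fun n => by
    rw [hy0, hyN]; exact Ioc_subset_Icc_self
  have hbound : ∀ n t, |stepFunction (y n) (fun i => φ (y n (i + 1))) (N n) t| ≤ max M 0 :=
    fun n => stepFunction.abs_le _ (hy n) (le_max_right _ _) fun i hi =>
      (hφM _ (hy0 n ▸ hyN n ▸ ⟨hy n i.succ.zero_le, hy n hi⟩)).trans (le_max_left _ _)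
  simp_rw [← stepFunction.setIntegral_mul _ (hy _) (hsub _) hg]
  refine tendsto_integral_of_dominated_convergence (fun t => max M 0 * ‖g t‖)
    (fun n => (stepFunction.measurable _).aestronglyMeasurable.mul hg.aestronglyMeasurable)
    (hg.norm.const_mul _) (fun n => .of_forall fun t => ?_) ?_
  · rw [norm_mul, Real.norm_eq_abs]
    exact mul_le_mul_of_nonneg_right (hbound n t) (norm_nonneg _)
  · have hIoc : ∀ᵐ t ∂volume.restrict (Icc a b), t ∈ Ioc a b := by
      rw [Measure.restrict_congr_set Ioc_ae_eq_Icc.symm]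
      exact ae_restrict_mem measurableSet_Ioc
    filter_upwards [hφc, hIoc] with t hc ht
    exact (tendsto_stepFunction_of_continuousWithinAt hy hy0 hyN hmesh ht hc).mul_const _

end Partitions

theorem tendsto_inv_mul_sum_sub_sum_mul {v m : ℕ → ℕ → ℝ} {M : ℝ}
    (hv : ∀ n, ∀ i ≤ n, |v n i| ≤ M)
    (hm : ∀ ε > 0, ∀ᶠ n : ℕ in atTop, ∀ i ≤ n, |m n i - 1 / n| ≤ ε / n) :
    Tendsto (fun n : ℕ => (1 / n : ℝ) * ∑ i ∈ range n, v n i -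
      ∑ i ∈ range (n + 1), v n i * m n i) atTop (𝓝 0) := by
  have hsplit : ∀ n : ℕ, (1 / n : ℝ) * ∑ i ∈ range n, v n i -
      ∑ i ∈ range (n + 1), v n i * m n i =
      ∑ i ∈ range (n + 1), v n i * (1 / n - m n i) - v n n * (1 / n) := fun n => by
    simp only [Finset.sum_range_succ, mul_sub, Finset.sum_sub_distrib, ← Finset.sum_mul]
    ring
  simp_rw [hsplit]
  rw [← sub_zero (0 : ℝ)]
  refine .sub (Metric.tendsto_nhds.2 fun ε hε => ?_) <|
    isBoundedUnder_le_mul_tendsto_zero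
      ⟨M, eventually_map.2 <| .of_forall fun n => hv n n le_rfl⟩
      (tendsto_const_div_atTop_nhds_zero_nat 1)
  have hM : 0 < |M| + 1 := by positivity
  filter_upwards [hm (ε / (4 * (|M| + 1))) (by positivity), eventually_gt_atTop 0] with n hn hn0
  have hn1 : (1 : ℝ) ≤ n := by exact_mod_cast hn0
  rw [dist_zero_right, Real.norm_eq_abs]
  calc |∑ i ∈ range (n + 1), v n i * (1 / n - m n i)|
      ≤ ∑ _i ∈ range (n + 1), (|M| + 1) * (ε / (4 * (|M| + 1)) / n) := by
        refine (abs_sum_le_sum_abs _ _).trans (Finset.sum_le_sum fun i hi => ?_)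
        rw [abs_mul, abs_sub_comm]
        have hi : i ≤ n := Nat.lt_succ_iff.1 (Finset.mem_range.1 hi)
        exact mul_le_mul ((hv n i hi).trans ((le_abs_self M).trans (lt_add_one _).le))
          (hn i hi) (abs_nonneg _) hM.le
    _ = (1 + 1 / n) * (ε / 4) := by
        rw [Finset.sum_const, Finset.card_range, nsmul_eq_mul]
        field_simp
        push_cast
        ring
    _ < ε := by
        have : 1 / (n : ℝ) ≤ 1 := by rw [div_le_one (by positivity)]; exact hn1
        nlinarith

theorem fixed_design_riemann_sum_approximation_general
    (x : ℕ → ℕ → ℝ) (fX : ℝ → ℝ)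
    -- deterministic design points 0 = x_{0,n} < x_{1,n} < … < x_{n,n} < x_{n+1,n} = 1
    (hx0 : ∀ n, x n 0 = 0) (hx1 : ∀ n, x n (n + 1) = 1)
    (hmono : ∀ n, ∀ i ≤ n, x n i < x n (i + 1))
    -- F_X is a cdf with continuous density f_X bounded away from zero on [0,1]
    (hfXcont : ContinuousOn fX (Set.Icc 0 1))
    (hfXpos : ∃ c > (0 : ℝ), ∀ t ∈ Set.Icc (0 : ℝ) 1, c ≤ fX t)
    -- (A2''):  max_{1 ≤ i ≤ n+1} |∫_{x_{i-1,n}}^{x_{i,n}} f_X − 1/n| = o(1/n)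
    (hA2 : ∀ ε > (0 : ℝ), ∀ᶠ n : ℕ in atTop, ∀ i, 1 ≤ i → i ≤ n + 1 →
        |(∫ t in (x n (i - 1))..(x n i), fX t) - 1 / n| ≤ ε / n)
    -- φ bounded and Riemann integrable on [0,1] (Lebesgue's criterion)
    (φ : ℝ → ℝ)
    (hφbdd : ∃ M : ℝ, ∀ t ∈ Set.Icc (0 : ℝ) 1, |φ t| ≤ M)
    (hφae : ∀ᵐ t ∂(volume.restrict (Set.Icc (0 : ℝ) 1)),
        ContinuousWithinAt φ (Set.Icc (0 : ℝ) 1) t) :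
    Tendsto (fun n : ℕ => (1 / n : ℝ) * ∑ i ∈ Finset.Icc 1 n, φ (x n i))
      atTop (𝓝 (∫ t in Set.Icc (0 : ℝ) 1, φ t * fX t)) := by
  obtain ⟨M, hM⟩ := hφbdd
  obtain ⟨c, hc, hcf⟩ := hfXpos
  -- freezing the design after x_{n+1,n} = 1 makes each row monotone on all of ℕ
  set y : ℕ → ℕ → ℝ := fun n i => x n (min i (n + 1))
  have hy : ∀ n, Monotone (y n) := fun n =>
    monotone_min_of_le_succ fun i hi => (hmono n i (Nat.lt_succ_iff.1 hi)).le
  have hyx : ∀ n i, i ≤ n + 1 → y n i = x n i := fun n i hi => congrArg (x n) (min_eq_left hi)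
  have hy0 : ∀ n, y n 0 = 0 := fun n => (hyx n 0 (Nat.zero_le _)).trans (hx0 n)
  have hy1 : ∀ n, y n (n + 1) = 1 := fun n => (hyx n _ le_rfl).trans (hx1 n)
  have hmass : ∀ ε > 0, ∀ᶠ n : ℕ in atTop, ∀ i ≤ n,
      |(∫ t in Ioc (y n i) (y n (i + 1)), fX t) - 1 / n| ≤ ε / n := fun ε hε => by
    filter_upwards [hA2 ε hε] with n hn i hi
    rw [← intervalIntegral.integral_of_le (hy n i.le_succ), hyx n i (by omega),
      hyx n (i + 1) (by omega)]
    simpa using hn (i + 1) (by omega) (by omega)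
  have hmesh := eventually_sub_le_of_integral_Ioc_le (K := 2) hy hy0 hy1 hc hcf
    hfXcont.integrableOn_Icc <| by
      filter_upwards [hmass 1 one_pos] with n hn i hi
      have hcell := (abs_le.1 (hn i (Nat.lt_succ_iff.1 hi))).2
      linarith [(by ring : (2 : ℝ) / n = 1 / n + 1 / n)]
  have hR := tendsto_inv_mul_sum_sub_sum_mul (v := fun n i => φ (y n (i + 1)))
    (fun n i hi => hM _ (hy0 n ▸ hy1 n ▸ ⟨hy n (Nat.zero_le _), hy n (by omega)⟩)) hmass
  have hS := tendsto_sum_mul_setIntegral_Ioc hy hy0 hy1 hmesh hM hφae hfXcont.integrableOn_Icc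
  have hsum : ∀ n, ∑ i ∈ Finset.Icc 1 n, φ (x n i) = ∑ i ∈ range n, φ (y n (i + 1)) :=
    fun n => by
      rw [Finset.range_eq_Ico, Finset.sum_Ico_add' fun j => φ (y n j), zero_add,
        Finset.Ico_add_one_right_eq_Icc]
      exact Finset.sum_congr rfl fun i hi =>
        congrArg φ (hyx n i ((Finset.mem_Icc.1 hi).2.trans n.le_succ)).symm
  simpa [hsum] using hR.add hS

/-- **Riemann-sum approximation under the design regularity condition (A2'').**
For every bounded Riemann-integrable function `φ : [0,1] → ℝ` (encoded via Lebesgue's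
criterion: bounded and almost everywhere continuous on `[0,1]`),
`(1/n) Σ_{i=1}^n φ(x_{i,n}) → ∫₀¹ φ(t) f_X(t) dt` as `n → ∞`. -/
theorem fixed_design_riemann_sum_approximation
    (x : ℕ → ℕ → ℝ) (fX : ℝ → ℝ)
    -- deterministic design points 0 = x_{0,n} < x_{1,n} < … < x_{n,n} < x_{n+1,n} = 1
    (hx0 : ∀ n, x n 0 = 0) (hx1 : ∀ n, x n (n + 1) = 1)
    (hmono : ∀ n, ∀ i ≤ n, x n i < x n (i + 1))
    -- F_X is a cdf with continuous density f_X bounded away from zero on [0,1]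
    (hfXcont : ContinuousOn fX (Set.Icc 0 1))
    (hfXpos : ∃ c > (0 : ℝ), ∀ t ∈ Set.Icc (0 : ℝ) 1, c ≤ fX t)
    (hfXone : (∫ t in (0 : ℝ)..1, fX t) = 1)
    -- (A2''):  max_{1 ≤ i ≤ n+1} |∫_{x_{i-1,n}}^{x_{i,n}} f_X − 1/n| = o(1/n)
    (hA2 : ∀ ε > (0 : ℝ), ∀ᶠ n : ℕ in atTop, ∀ i, 1 ≤ i → i ≤ n + 1 →
        |(∫ t in (x n (i - 1))..(x n i), fX t) - 1 / n| ≤ ε / n)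
    -- φ bounded and Riemann integrable on [0,1] (Lebesgue's criterion)
    (φ : ℝ → ℝ)
    (hφbdd : ∃ M : ℝ, ∀ t ∈ Set.Icc (0 : ℝ) 1, |φ t| ≤ M)
    (hφae : ∀ᵐ t ∂(volume.restrict (Set.Icc (0 : ℝ) 1)),
        ContinuousWithinAt φ (Set.Icc (0 : ℝ) 1) t)
    (hφmeas : AEStronglyMeasurable φ (volume.restrict (Set.Icc (0 : ℝ) 1))) :
    Tendsto (fun n : ℕ => (1 / n : ℝ) * ∑ i ∈ Finset.Icc 1 n, φ (x n i))
      atTop (𝓝 (∫ t in Set.Icc (0 : ℝ) 1, φ t * fX t)) :=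
  fixed_design_riemann_sum_approximation_general x fX hx0 hx1 hmono hfXcont hfXpos hA2 φ hφbdd hφae
end
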